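/- arXiv:2303.09626 — 7 statements merged into one kernel-verified Lean document; each statement's English description precedes it below -/
import Mathlib

section
/- Let L be an N×N complex matrix with no eigenvalues on the imaginary axis. Then half the signature of L (defined as half the difference between the total algebraic multiplicity of eigenvalues with positive real part and those with negative real part) equals (1/2πi) ∫_{-∞}^{∞} ∂_s log det(L + i s·1) ds. -/
/-!
Along the imaginary axis `det (L + s i) = i ^ N ∏ (s - i z)` over the eigenvalues `z`, a polynomial
in `s` without real roots. Its imaginary part is a real polynomial in `s`: either it vanishes
identically, so `det` is real near every `s` and `log det` does not jump at the branch cut, or it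
has finitely many zeros. So, off a null set, `∂ₛ log det` is the logarithmic derivative
`∑ 1 / (s - i z)`. The term of `w = i z` integrates over `[-R, R]` to
`log (R - w) - log (-R - w)`, which tends to `π i · sign (Re z)` because `-R - w` approaches the
negative real axis from the half-plane opposite to `w`.
-/

open MeasureTheory Filter intervalIntegral

/-- Total algebraic multiplicity of eigenvalues of `L` with positive real part. -/
noncomputable def posEigMult {N : ℕ} (L : Matrix (Fin N) (Fin N) ℂ) : ℕ :=
  @Multiset.countP ℂ (fun z => 0 < z.re) (Classical.decPred _) (Matrix.charpoly L).roots

/-- Total algebraic multiplicity of eigenvalues of `L` with negative real part. -/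
noncomputable def negEigMult {N : ℕ} (L : Matrix (Fin N) (Fin N) ℂ) : ℕ :=
  @Multiset.countP ℂ (fun z => z.re < 0) (Classical.decPred _) (Matrix.charpoly L).roots

open Complex Polynomial Topology Real

lemma Complex.log_eq_log_neg_add_pi_mul_I {x : ℂ} (hre : x.re < 0) (him : x.im = 0) :
    log x = log (-x) + π * I := by
  have harg : arg (-x) = 0 := arg_eq_zero_iff.2 ⟨by simpa using hre.le, by simpa using him⟩
  simp [log, arg_eq_pi_iff.2 ⟨hre, him⟩, harg]

lemma Complex.ofReal_sub_ne_zero {w : ℂ} (hw : w.im ≠ 0) (s : ℝ) : (s : ℂ) - w ≠ 0 := by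
  intro h
  simpa [hw] using congrArg im h

/-- On the negative real axis `log` jumps, but a curve that stays real near `s` does not cross
the cut there. -/
lemma HasDerivAt.clog_real_of_eventually_im_eq_zero {f : ℝ → ℂ} {f' : ℂ} {s : ℝ}
    (hf : HasDerivAt f f' s) (hs : f s ≠ 0) (him : ∀ᶠ t in 𝓝 s, (f t).im = 0) :
    HasDerivAt (fun t => Complex.log (f t)) (f' / f s) s := by
  by_cases hslit : f s ∈ slitPlane
  · exact hf.clog_real hslit
  have hre : (f s).re < 0 := by
    simp only [mem_slitPlane_iff, not_or, not_lt, not_not] at hslit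
    exact hslit.1.lt_of_ne fun h => hs (Complex.ext h hslit.2)
  have hneg : HasDerivAt (fun t => Complex.log (-f t)) (-f' / -f s) s :=
    hf.neg.clog_real (by simp [mem_slitPlane_iff, hre])
  rw [neg_div_neg_eq] at hneg
  refine (hneg.add_const (π * I)).congr_of_eventuallyEq ?_
  filter_upwards [him, (continuous_re.continuousAt.comp hf.continuousAt).eventually
    (gt_mem_nhds hre)] with t ht htre
  exact log_eq_log_neg_add_pi_mul_I htre ht

lemma Multiset.sum_map_sign {α : Type*} (s : Multiset α) (f : α → ℝ)
    [DecidablePred fun a => 0 < f a] [DecidablePred fun a => f a < 0] :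
    (s.map fun a => (SignType.sign (f a) : ℤ)).sum
      = s.countP (fun a => 0 < f a) - s.countP (fun a => f a < 0) := by
  induction s using Multiset.induction_on with
  | empty => simp
  | cons a s ih =>
    simp only [Multiset.map_cons, Multiset.sum_cons, Multiset.countP_cons, ih]
    rcases lt_trichotomy (f a) 0 with h | h | h
    · simp [h, h.not_gt]; ring
    · simp [h]
    · simp [h, h.not_gt]; ring

lemma integral_one_div_ofReal_sub {w : ℂ} (hw : w.im ≠ 0) (a b : ℝ) :
    ∫ s in a..b, 1 / ((s : ℂ) - w) = log (b - w) - log (a - w) := by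
  refine integral_eq_sub_of_hasDerivAt (f := fun s : ℝ => log ((s : ℂ) - w))
    (fun s _ => ?_) ?_
  · simpa using ((hasDerivAt_id (s : ℂ)).comp_ofReal.sub_const w).clog_real
      (mem_slitPlane_iff.2 (Or.inr (by simpa using hw)))
  · exact (continuous_const.div (by fun_prop) (ofReal_sub_ne_zero hw)).intervalIntegrable _ _

/-- For `R > 0`, `log (±R - w) = log R + log (±1 - w / R)`, and `-1 - w / R` tends to `-1` from
the half-plane opposite to `w`, where `log` tends to `∓ π i`. -/
lemma tendsto_log_sub_sub_log_neg_sub {w : ℂ} (hw : w.im ≠ 0) :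
    Tendsto (fun R : ℝ => log (R - w) - log (-R - w)) atTop
      (𝓝 ((SignType.sign w.im : ℂ) * (π * I))) := by
  have hu : Tendsto (fun R : ℝ => w / R) atTop (𝓝 0) := by
    simpa [div_eq_mul_inv] using tendsto_inv_atTop_zero.ofReal.const_mul w
  have hrescale : ∀ᶠ R : ℝ in atTop, log (R - w) - log (-R - w)
      = log (1 - w / R) - log (-1 - w / R) := by
    filter_upwards [eventually_gt_atTop 0] with R hR
    have hsplit (c : ℝ) : log (c * R - w) = Real.log R + log (c - w / R) := by
      rw [← log_ofReal_mul hR (ofReal_sub_ne_zero (by simp [hw, hR.ne']) c)]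
      congr 1
      field_simp [ofReal_ne_zero.2 hR.ne']
    simpa using congrArg₂ (· - ·) (hsplit 1) (hsplit (-1))
  have hright : Tendsto (fun R : ℝ => log (1 - w / R)) atTop (𝓝 0) := by
    simpa [Function.comp_def] using (continuousAt_clog (by simp)).tendsto.comp (hu.const_sub 1)
  have hleft : Tendsto (fun R : ℝ => -1 - w / R) atTop (𝓝 (-1)) := by
    simpa using hu.const_sub (-1)
  refine Tendsto.congr' (EventuallyEq.symm hrescale) ?_
  rcases hw.lt_or_gt with hneg | hpos
  · have hleft' : Tendsto (fun R : ℝ => -1 - w / R) atTop (𝓝[{z : ℂ | 0 ≤ z.im}] (-1)) := by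
      refine tendsto_nhdsWithin_iff.2 ⟨hleft, ?_⟩
      filter_upwards [eventually_gt_atTop 0] with R hR
      simpa [div_ofReal_im] using (div_neg_of_neg_of_pos hneg hR).le
    simpa [hneg] using hright.sub
      ((tendsto_log_nhdsWithin_im_nonneg_of_re_neg_of_im_zero (by simp) (by simp)).comp hleft')
  · have hleft' : Tendsto (fun R : ℝ => -1 - w / R) atTop (𝓝[{z : ℂ | z.im < 0}] (-1)) := by
      refine tendsto_nhdsWithin_iff.2 ⟨hleft, ?_⟩
      filter_upwards [eventually_gt_atTop 0] with R hR
      simpa [div_ofReal_im] using div_pos hpos hR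
    simpa [hpos] using hright.sub
      ((tendsto_log_nhdsWithin_im_neg_of_re_neg_of_im_zero (by simp) (by simp)).comp hleft')

lemma tendsto_integral_sum_one_div_ofReal_sub {ν : Multiset ℂ} (hν : ∀ w ∈ ν, w.im ≠ 0) :
    Tendsto (fun R : ℝ => ∫ s in -R..R, (ν.map fun w => 1 / ((s : ℂ) - w)).sum) atTop
      (𝓝 ((ν.map fun w => (SignType.sign w.im : ℂ)).sum * (π * I))) := by
  induction ν using Multiset.induction_on with
  | empty => simp
  | cons a ν ih =>
    have ha : a.im ≠ 0 := hν a (Multiset.mem_cons_self a ν)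
    have hν' : ∀ w ∈ ν, w.im ≠ 0 := fun w hw => hν w (Multiset.mem_cons_of_mem hw)
    have hcont (w : ℂ) (hw : w.im ≠ 0) : Continuous fun s : ℝ => 1 / ((s : ℂ) - w) :=
      continuous_const.div (by fun_prop) (ofReal_sub_ne_zero hw)
    have hsplit (R : ℝ) : ∫ s in -R..R, ((a ::ₘ ν).map fun w => 1 / ((s : ℂ) - w)).sum
        = (log (R - a) - log (-R - a)) + ∫ s in -R..R, (ν.map fun w => 1 / ((s : ℂ) - w)).sum := by
      simp only [Multiset.map_cons, Multiset.sum_cons]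
      rw [integral_add ((hcont a ha).intervalIntegrable _ _)
        ((continuous_multiset_sum _ fun w hw => hcont w (hν' w hw)).intervalIntegrable _ _),
        integral_one_div_ofReal_sub ha, ofReal_neg]
    refine Tendsto.congr (fun R => (hsplit R).symm) ?_
    rw [Multiset.map_cons, Multiset.sum_cons, add_mul]
    exact (tendsto_log_sub_sub_log_neg_sub ha).add (ih hν')

namespace Polynomial

lemma eval_map_conj_ofReal (P : ℂ[X]) (t : ℝ) :
    (P.map (starRingEnd ℂ)).eval (t : ℂ) = starRingEnd ℂ (P.eval (t : ℂ)) := by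
  rw [← eval_map_apply, conj_ofReal]

lemma forall_im_eval_ofReal_eq_zero_or_finite (P : ℂ[X]) :
    (∀ t : ℝ, (P.eval (t : ℂ)).im = 0) ∨ {t : ℝ | (P.eval (t : ℂ)).im = 0}.Finite := by
  have hroot (t : ℝ) : (P.eval (t : ℂ)).im = 0 ↔ (P - P.map (starRingEnd ℂ)).IsRoot t := by
    rw [IsRoot, eval_sub, eval_map_conj_ofReal, sub_eq_zero, ← conj_eq_iff_im, eq_comm]
  by_cases hQ : P - P.map (starRingEnd ℂ) = 0
  · exact Or.inl fun t => (hroot t).2 (by simp [hQ])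
  · refine Or.inr (((finite_setOfPred_isRoot hQ).preimage ofReal_injective.injOn).subset ?_)
    exact fun t ht => (hroot t).1 ht

lemma ae_hasDerivAt_clog_eval_ofReal (P : ℂ[X]) (hP : ∀ t : ℝ, P.eval (t : ℂ) ≠ 0) :
    ∀ᵐ s : ℝ, HasDerivAt (fun t : ℝ => log (P.eval (t : ℂ)))
      (P.derivative.eval (s : ℂ) / P.eval (s : ℂ)) s := by
  have hderiv (s : ℝ) : HasDerivAt (fun t : ℝ => P.eval (t : ℂ)) (P.derivative.eval (s : ℂ)) s :=
    (P.hasDerivAt (s : ℂ)).comp_ofReal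
  rcases P.forall_im_eval_ofReal_eq_zero_or_finite with hreal | hfin
  · exact ae_of_all _ fun s =>
      (hderiv s).clog_real_of_eventually_im_eq_zero (hP s) (Eventually.of_forall hreal)
  · refine measure_mono_null (fun s hs => ?_) (hfin.countable.measure_zero volume)
    by_contra him
    exact hs ((hderiv s).clog_real (mem_slitPlane_iff.2 (Or.inr him)))

theorem tendsto_integral_deriv_clog_eval_ofReal (P : ℂ[X]) (hP : ∀ t : ℝ, P.eval (t : ℂ) ≠ 0) :
    Tendsto (fun R : ℝ => ∫ s in -R..R, deriv (fun t : ℝ => log (P.eval (t : ℂ))) s) atTop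
      (𝓝 (((P.roots.countP (0 < ·.im) - P.roots.countP (·.im < 0) : ℤ) : ℂ) * (π * I))) := by
  have hroots : ∀ w ∈ P.roots, w.im ≠ 0 := fun w hw him => by
    refine hP w.re ?_
    rw [show (w.re : ℂ) = w from Complex.ext rfl (by simp [him])]
    exact (mem_roots'.1 hw).2
  have hlogderiv : ∀ᵐ s : ℝ, deriv (fun t : ℝ => log (P.eval (t : ℂ))) s
      = (P.roots.map fun w => 1 / ((s : ℂ) - w)).sum := by
    filter_upwards [P.ae_hasDerivAt_clog_eval_ofReal hP] with s hs
    rw [hs.deriv, (IsAlgClosed.splits P).eval_derivative_div_eval_of_ne_zero (hP s)]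
  have hsign : (P.roots.map fun w => (SignType.sign w.im : ℂ)).sum
      = ((P.roots.countP (0 < ·.im) - P.roots.countP (·.im < 0) : ℤ) : ℂ) := by
    rw [← Multiset.sum_map_sign, Int.cast_multiset_sum, Multiset.map_map]
    simp [SignType.intCast_cast]
  rw [← hsign]
  refine (tendsto_integral_sum_one_div_ofReal_sub hroots).congr fun R => ?_
  exact integral_congr_ae (hlogderiv.mono fun s hs _ => hs.symm)

end Polynomial

lemma Matrix.det_add_smul_one_eq_prod_roots {n K : Type*} [Fintype n] [DecidableEq n] [Field K]
    [IsAlgClosed K] (L : Matrix n n K) (c : K) :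
    (L + c • 1).det = (L.charpoly.roots.map (· + c)).prod := by
  have hsplits := IsAlgClosed.splits L.charpoly
  have hcard : Multiset.card L.charpoly.roots = Fintype.card n := by
    rw [← hsplits.natDegree_eq_card_roots, charpoly_natDegree_eq_dim]
  have hneg : L.charpoly.roots.map (-c - ·) = (L.charpoly.roots.map (· + c)).map Neg.neg := by
    rw [Multiset.map_map]
    exact Multiset.map_congr rfl fun z _ => by simp only [Function.comp_apply]; ring
  have heval := L.eval_charpoly (-c)
  rw [hsplits.eval_eq_prod_roots, L.charpoly_monic.leadingCoeff, one_mul, hneg,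
    Multiset.prod_map_neg, Multiset.card_map, hcard,
    show scalar n (-c) - L = -(L + c • 1) by simp [smul_one_eq_diagonal, ← diagonal_neg]; abel,
    det_neg] at heval
  exact (mul_left_cancel₀ (pow_ne_zero _ (neg_ne_zero.2 one_ne_zero)) heval).symm

/-- Each factor `z + c i` of `det (L + c i)` equals `i (c - i z)`. -/
lemma Matrix.exists_det_add_mul_I_smul_one_eq_eval {n : Type*} [Fintype n] [DecidableEq n]
    (L : Matrix n n ℂ) :
    ∃ P : ℂ[X], P ≠ 0 ∧ P.roots = L.charpoly.roots.map (I * ·) ∧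
      ∀ c : ℂ, (L + (c * I) • 1).det = P.eval c := by
  have hcard : Multiset.card L.charpoly.roots = Fintype.card n := by
    rw [← (IsAlgClosed.splits L.charpoly).natDegree_eq_card_roots, charpoly_natDegree_eq_dim]
  set Q : ℂ[X] := ((L.charpoly.roots.map (I * ·)).map (X - C ·)).prod
  have hQ : Q ≠ 0 := (monic_multiset_prod_of_monic _ _ fun w _ => monic_X_sub_C w).ne_zero
  have hI : I ^ Fintype.card n ≠ 0 := pow_ne_zero _ I_ne_zero
  refine ⟨C (I ^ Fintype.card n) * Q, mul_ne_zero (C_ne_zero.2 hI) hQ, ?_, fun c => ?_⟩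
  · rw [roots_C_mul _ hI, roots_multiset_prod_X_sub_C]
  · rw [det_add_smul_one_eq_prod_roots, eval_mul, eval_C, eval_multiset_prod, Multiset.map_map,
      Multiset.map_map, ← hcard, ← Multiset.prod_replicate, ← Multiset.map_const',
      ← Multiset.prod_map_mul]
    refine congrArg _ (Multiset.map_congr rfl fun z _ => ?_)
    simp only [Function.comp_apply, eval_sub, eval_X, eval_C]
    linear_combination z * I_sq

/-- For an `N×N` complex matrix `L` with no eigenvalues on the imaginary
axis, half the signature `Sig(L) = N₊ − N₋` equals
`(1/2πi) ∫_{-∞}^{∞} ∂ₛ log det(L + i s 1) ds` (as a principal value / symmetric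
improper integral). -/
theorem half_signature_eq_log_det_integral {N : ℕ} (L : Matrix (Fin N) (Fin N) ℂ)
    (hgap : ∀ z ∈ (Matrix.charpoly L).roots, z.re ≠ 0) :
    Tendsto (fun R : ℝ =>
        (1 / (2 * (Real.pi : ℂ) * Complex.I)) *
          ∫ s in (-R)..R,
            deriv (fun t : ℝ => Complex.log ((L + ((t : ℂ) * Complex.I) • 1).det)) s)
      atTop
      (nhds ((((posEigMult L : ℤ) - (negEigMult L : ℤ) : ℤ) : ℂ) / 2)) := by
  obtain ⟨P, hP0, hroots, hdet⟩ := L.exists_det_add_mul_I_smul_one_eq_eval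
  have hnoreal : ∀ t : ℝ, P.eval (t : ℂ) ≠ 0 := fun t ht => by
    obtain ⟨z, hz, hzt⟩ := Multiset.mem_map.1 (hroots ▸ (mem_roots hP0).2 ht)
    exact hgap z hz (by simpa using congrArg im hzt)
  have hlim := (P.tendsto_integral_deriv_clog_eval_ofReal hnoreal).const_mul (1 / (2 * π * I))
  simp only [hroots, Multiset.countP_map, ← Multiset.countP_eq_card_filter, I_mul_im] at hlim
  simp only [hdet, posEigMult, negEigMult]
  convert hlim using 2
  field_simp
end

section
/- Let H be a bounded operator on ℓ²(ℤᵈ, ℂᴸ) satisfying the short-range condition ‖⟨n|H|m⟩‖ ≤ C/(1+|n−m|^α) for some α > d+2. Then H maps the domain of the position operator weight {ψ : Σ_n |n|²‖ψ_n‖² < ∞} into itself. -/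
/-!
Put `u_m = (1 + |m|) ‖ψ_m‖`, which lies in `ℓ²` by the hypothesis on `ψ`. Expanding `Hψ` over
the lattice sites and using `1 + |n| ≤ (1 + |n - m|) (1 + |m|)` gives
`(1 + |n|) ‖(Hψ)_n‖ ≤ ∑_m g(n - m) u_m` with `g(k) = max C 0 · (1 + |k|) / (1 + |k|^α)`, and
`g ∈ ℓ¹(ℤᵈ)` because `α - 1 > d`. Young's inequality `ℓ¹ * ℓ² ⊆ ℓ²` then puts
`n ↦ |n| ‖(Hψ)_n‖` in `ℓ²`.
-/

/-- Euclidean norm of a lattice point `n ∈ ℤᵈ`. -/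
noncomputable def zEucNorm {d : ℕ} (n : Fin d → ℤ) : ℝ :=
  Real.sqrt (∑ j, ((n j : ℝ)) ^ 2)

open Filter Submodule
open scoped ENNReal

section CauchySchwarz

variable {ι : Type*} {r f g : ι → ℝ}

lemma summable_of_sq_le_mul (hr : ∀ i, 0 ≤ r i) (hf0 : ∀ i, 0 ≤ f i) (hg0 : ∀ i, 0 ≤ g i)
    (hrfg : ∀ i, r i ^ 2 ≤ f i * g i) (hf : Summable f) (hg : Summable g) : Summable r :=
  .of_nonneg_of_le hr (fun i => by
    linarith [two_mul_le_add_of_sq_le_mul (hf0 i) (hg0 i) (hrfg i), hr i, hf0 i, hg0 i])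
    (hf.add hg)

lemma tsum_sq_le_tsum_mul_tsum_of_sq_le_mul (hr : ∀ i, 0 ≤ r i) (hf0 : ∀ i, 0 ≤ f i)
    (hg0 : ∀ i, 0 ≤ g i) (hrfg : ∀ i, r i ^ 2 ≤ f i * g i) (hf : Summable f) (hg : Summable g) :
    (∑' i, r i) ^ 2 ≤ (∑' i, f i) * ∑' i, g i := by
  have hr_sum := summable_of_sq_le_mul hr hf0 hg0 hrfg hf hg
  refine le_of_tendsto_of_tendsto' (hr_sum.hasSum.pow 2) (Tendsto.mul hf.hasSum hg.hasSum)
    fun s => ?_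
  exact Finset.sum_sq_le_sum_mul_sum_of_sq_le_mul s (fun i _ => hf0 i) (fun i _ => hg0 i)
    fun i _ => hrfg i

end CauchySchwarz

lemma summable_one_add_mul_sq {ι : Type*} {w a : ι → ℝ} (ha : Summable fun i => a i ^ 2)
    (hwa : Summable fun i => w i ^ 2 * a i ^ 2) : Summable fun i => ((1 + w i) * a i) ^ 2 :=
  .of_nonneg_of_le (fun i => sq_nonneg _)
    (fun i => by nlinarith [sq_nonneg ((1 - w i) * a i)]) ((ha.mul_left 2).add (hwa.mul_left 2))

section Convolution

variable {ι : Type*} [AddCommGroup ι] {g u : ι → ℝ}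

lemma summable_sub_mul_sq (hg0 : ∀ k, 0 ≤ g k) (hg : Summable g)
    (hu : Summable fun m => u m ^ 2) (n : ι) : Summable fun m => g (n - m) * u m ^ 2 :=
  .of_nonneg_of_le (fun m => mul_nonneg (hg0 (n - m)) (sq_nonneg (u m)))
    (fun m => mul_le_mul_of_nonneg_right (hg.le_tsum _ fun k _ => hg0 k) (sq_nonneg (u m)))
    (hu.mul_left (∑' k, g k))

lemma summable_sub_mul (hg0 : ∀ k, 0 ≤ g k) (hg : Summable g) (hu0 : ∀ m, 0 ≤ u m)
    (hu : Summable fun m => u m ^ 2) (n : ι) : Summable fun m => g (n - m) * u m :=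
  summable_of_sq_le_mul (fun m => mul_nonneg (hg0 _) (hu0 _)) (fun m => hg0 (n - m))
    (fun m => mul_nonneg (hg0 _) (sq_nonneg _)) (fun _ => le_of_eq (by ring))
    ((Equiv.subLeft n).summable_iff.mpr hg) (summable_sub_mul_sq hg0 hg hu n)

/-- Young's inequality `‖g * u‖₂ ≤ ‖g‖₁ ‖u‖₂`, in the form of summability. -/
lemma summable_sq_tsum_sub_mul (hg0 : ∀ k, 0 ≤ g k) (hg : Summable g) (hu0 : ∀ m, 0 ≤ u m)
    (hu : Summable fun m => u m ^ 2) : Summable fun n => (∑' m, g (n - m) * u m) ^ 2 := by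
  have hconv : Summable fun n => ∑' m, g (n - m) * u m ^ 2 := by
    have hprod := (hg.mul_of_nonneg hu (fun k => hg0 k) fun m => sq_nonneg (u m)).comp_injective
      (i := fun p : ι × ι => (p.1 - p.2, p.2)) fun p q h => by
        simp only [Prod.mk.injEq] at h
        exact Prod.ext (by simpa [h.2] using h.1) h.2
    exact hprod.prod
  refine .of_nonneg_of_le (fun n => sq_nonneg _) (fun n => ?_) (hconv.mul_left (∑' k, g k))
  have hCS := tsum_sq_le_tsum_mul_tsum_of_sq_le_mul (fun m => mul_nonneg (hg0 _) (hu0 _))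
    (fun m => hg0 (n - m)) (fun m => mul_nonneg (hg0 _) (sq_nonneg _))
    (fun _ => le_of_eq (by ring)) ((Equiv.subLeft n).summable_iff.mpr hg)
    (summable_sub_mul_sq hg0 hg hu n)
  rwa [show ∑' m, g (n - m) = ∑' k, g k from (Equiv.subLeft n).tsum_eq g] at hCS

end Convolution

lemma norm_apply_le_tsum_of_norm_apply_single_le {𝕜 ι κ E F : Type*} [NormedField 𝕜]
    [NormedAddCommGroup E] [NormedSpace 𝕜 E] [NormedAddCommGroup F] [NormedSpace 𝕜 F]
    [DecidableEq ι] {p q : ℝ≥0∞} [Fact (1 ≤ p)] [Fact (1 ≤ q)] (hp : p ≠ ⊤)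
    (H : lp (fun _ : ι => E) p →L[𝕜] lp (fun _ : κ => F) q) {K : κ → ι → ℝ}
    (hK : ∀ n m v, ‖H (lp.single p m v) n‖ ≤ K n m * ‖v‖) (ψ : lp (fun _ : ι => E) p) (n : κ)
    (hs : Summable fun m => K n m * ‖ψ m‖) : ‖H ψ n‖ ≤ ∑' m, K n m * ‖ψ m‖ := by
  have hexp : HasSum (fun m => H (lp.single p m (ψ m)) n) (H ψ n) :=
    (H.hasSum (lp.hasSum_single hp ψ)).map
      ((Pi.evalAddMonoidHom _ n).comp (lp.coeFnAddMonoidHom _ q))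
      (lp.lipschitzWith_one_eval q n).continuous
  exact hexp.norm_le_of_bounded hs.hasSum fun m => hK n m (ψ m)

section Lattice

abbrev intLattice (d : ℕ) : Submodule ℤ (EuclideanSpace ℝ (Fin d)) :=
  span ℤ (Set.range (EuclideanSpace.basisFun (Fin d) ℝ).toBasis)

noncomputable def intLatticeEquiv (d : ℕ) : (Fin d → ℤ) ≃ₗ[ℤ] intLattice d :=
  ((EuclideanSpace.basisFun (Fin d) ℝ).toBasis.restrictScalars ℤ).equivFun.symm

lemma coe_intLatticeEquiv {d : ℕ} (k : Fin d → ℤ) :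
    (intLatticeEquiv d k : EuclideanSpace ℝ (Fin d)) = WithLp.toLp 2 fun j => (k j : ℝ) := by
  ext j
  rw [intLatticeEquiv, Module.Basis.equivFun_symm_apply, Submodule.coe_sum]
  simp_rw [SetLike.val_smul, Module.Basis.restrictScalars_apply]
  simp [Pi.single_apply]

lemma finrank_intLattice (d : ℕ) : Module.finrank ℤ (intLattice d) = d := by
  rw [Module.finrank_eq_card_basis ((EuclideanSpace.basisFun (Fin d) ℝ).toBasis.restrictScalars ℤ),
    Fintype.card_fin]

lemma zEucNorm_eq_norm_intLatticeEquiv {d : ℕ} (k : Fin d → ℤ) :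
    zEucNorm k = ‖intLatticeEquiv d k‖ := by
  simp [coe_intLatticeEquiv, EuclideanSpace.norm_eq, zEucNorm]

lemma zEucNorm_nonneg {d : ℕ} (k : Fin d → ℤ) : 0 ≤ zEucNorm k := Real.sqrt_nonneg _

lemma one_le_zEucNorm {d : ℕ} {k : Fin d → ℤ} (hk : k ≠ 0) : 1 ≤ zEucNorm k := by
  obtain ⟨j, hj⟩ := Function.ne_iff.mp hk
  have hj1 : (1 : ℝ) ≤ (k j : ℝ) ^ 2 := by
    have : (1 : ℤ) ≤ k j ^ 2 := by nlinarith [Int.one_le_abs hj, sq_abs (k j)]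
    exact_mod_cast this
  rw [zEucNorm, Real.one_le_sqrt]
  exact hj1.trans (Finset.single_le_sum (f := fun i => (k i : ℝ) ^ 2)
    (fun i _ => sq_nonneg _) (Finset.mem_univ j))

/-- Peetre's inequality on `ℤᵈ`. -/
lemma one_add_zEucNorm_le_mul {d : ℕ} (n m : Fin d → ℤ) :
    1 + zEucNorm n ≤ (1 + zEucNorm (n - m)) * (1 + zEucNorm m) := by
  have htri : zEucNorm n ≤ zEucNorm (n - m) + zEucNorm m := by
    simp_rw [zEucNorm_eq_norm_intLatticeEquiv, map_sub]
    exact norm_le_norm_sub_add _ _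
  nlinarith [mul_nonneg (zEucNorm_nonneg (n - m)) (zEucNorm_nonneg m)]

lemma summable_zEucNorm_rpow {d : ℕ} {r : ℝ} (hr : r < -d) :
    Summable fun k : Fin d → ℤ => zEucNorm k ^ r := by
  refine ((intLatticeEquiv d).toEquiv.summable_iff.mpr
    (ZLattice.summable_norm_rpow _ r (by rwa [finrank_intLattice]))).congr fun k => ?_
  rw [zEucNorm_eq_norm_intLatticeEquiv]
  rfl

lemma summable_one_add_zEucNorm_div {d : ℕ} {α : ℝ} (hα : (d : ℝ) + 1 < α) :
    Summable fun k : Fin d → ℤ => (1 + zEucNorm k) / (1 + zEucNorm k ^ α) := by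
  refine Summable.of_norm_bounded_eventually
    ((summable_zEucNorm_rpow (r := 1 - α) (by linarith)).mul_left 2) ?_
  filter_upwards [eventually_cofinite_ne 0] with k hk
  have ht := one_le_zEucNorm hk
  have htα : 0 < zEucNorm k ^ α := Real.rpow_pos_of_pos (by linarith) α
  rw [Real.norm_of_nonneg (by positivity), Real.rpow_sub (by linarith), Real.rpow_one,
    mul_div_assoc', div_le_div_iff₀ (by positivity) htα]
  nlinarith

end Lattice

section ShortRange

variable {d : ℕ} {c α : ℝ}

noncomputable def shortRangeWeight (c α : ℝ) (k : Fin d → ℤ) : ℝ :=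
  c * ((1 + zEucNorm k) / (1 + zEucNorm k ^ α))

lemma one_add_zEucNorm_rpow_pos (α : ℝ) (k : Fin d → ℤ) : 0 < 1 + zEucNorm k ^ α := by
  positivity [Real.rpow_nonneg (zEucNorm_nonneg k) α]

lemma shortRangeWeight_nonneg (hc : 0 ≤ c) (k : Fin d → ℤ) : 0 ≤ shortRangeWeight c α k := by
  unfold shortRangeWeight
  positivity [zEucNorm_nonneg k, (one_add_zEucNorm_rpow_pos α k).le]

lemma summable_shortRangeWeight (hα : (d : ℝ) + 1 < α) : Summable (shortRangeWeight (d := d) c α) :=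
  (summable_one_add_zEucNorm_div hα).mul_left c

lemma one_add_zEucNorm_mul_div_le (hc : 0 ≤ c) (n m : Fin d → ℤ) :
    (1 + zEucNorm n) * (c / (1 + zEucNorm (n - m) ^ α)) ≤
      shortRangeWeight c α (n - m) * (1 + zEucNorm m) := by
  calc _ ≤ (1 + zEucNorm (n - m)) * (1 + zEucNorm m) * (c / (1 + zEucNorm (n - m) ^ α)) := by
        gcongr
        · positivity [(one_add_zEucNorm_rpow_pos α (n - m)).le]
        · exact one_add_zEucNorm_le_mul n m
    _ = shortRangeWeight c α (n - m) * (1 + zEucNorm m) := by unfold shortRangeWeight; ring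

lemma one_add_zEucNorm_mul_norm_apply_le {𝕜 E F : Type*} [NormedField 𝕜]
    [NormedAddCommGroup E] [NormedSpace 𝕜 E] [NormedAddCommGroup F] [NormedSpace 𝕜 F]
    (hc : 0 ≤ c) (hα : (d : ℝ) + 1 < α)
    (H : lp (fun _ : Fin d → ℤ => E) 2 →L[𝕜] lp (fun _ : Fin d → ℤ => F) 2)
    (hK : ∀ n m v, ‖H (lp.single 2 m v) n‖ ≤ c / (1 + zEucNorm (n - m) ^ α) * ‖v‖)
    (ψ : lp (fun _ : Fin d → ℤ => E) 2)
    (hψ : Summable fun m => ((1 + zEucNorm m) * ‖ψ m‖) ^ 2) (n : Fin d → ℤ) :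
    (1 + zEucNorm n) * ‖H ψ n‖ ≤
      ∑' m, shortRangeWeight c α (n - m) * ((1 + zEucNorm m) * ‖ψ m‖) := by
  have hconv := summable_sub_mul (shortRangeWeight_nonneg hc) (summable_shortRangeWeight hα)
    (fun m => by positivity [zEucNorm_nonneg m]) hψ n
  have hweight : ∀ m, (1 + zEucNorm n) * (c / (1 + zEucNorm (n - m) ^ α) * ‖ψ m‖) ≤
      shortRangeWeight c α (n - m) * ((1 + zEucNorm m) * ‖ψ m‖) := fun m => by
    rw [← mul_assoc, ← mul_assoc]
    exact mul_le_mul_of_nonneg_right (one_add_zEucNorm_mul_div_le hc n m) (norm_nonneg _)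
  have hs : Summable fun m => c / (1 + zEucNorm (n - m) ^ α) * ‖ψ m‖ :=
    .of_nonneg_of_le (fun m => by positivity [(one_add_zEucNorm_rpow_pos α (n - m)).le])
      (fun m => (le_mul_of_one_le_left (by positivity [(one_add_zEucNorm_rpow_pos α (n - m)).le])
        (by linarith [zEucNorm_nonneg n])).trans (hweight m)) hconv
  calc (1 + zEucNorm n) * ‖H ψ n‖
      ≤ (1 + zEucNorm n) * ∑' m, c / (1 + zEucNorm (n - m) ^ α) * ‖ψ m‖ := by
        gcongr
        exacts [by positivity [zEucNorm_nonneg n],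
          norm_apply_le_tsum_of_norm_apply_single_le (by norm_num) H hK ψ n hs]
    _ ≤ _ := by
        rw [← tsum_mul_left]
        exact (hs.mul_left _).tsum_le_tsum hweight hconv

end ShortRange

/-- A bounded operator `H` on `ℓ²(ℤᵈ, ℂᴸ)` whose matrix blocks satisfy the
short-range condition `‖⟨n|H|m⟩‖ ≤ C/(1+|n−m|^α)` with `α > d+2` maps the domain
`{ψ : Σ_n |n|²‖ψ_n‖² < ∞}` of the position operator weight into itself. -/
theorem shortRange_preserves_position_domain {d L : ℕ} (C α : ℝ) (hα : (d : ℝ) + 2 < α)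
    (H : lp (fun _ : Fin d → ℤ => EuclideanSpace ℂ (Fin L)) 2 →L[ℂ]
         lp (fun _ : Fin d → ℤ => EuclideanSpace ℂ (Fin L)) 2)
    (hshort : ∀ n m : Fin d → ℤ, ∀ v : EuclideanSpace ℂ (Fin L),
        ‖(H (lp.single 2 m v) : ∀ _ : Fin d → ℤ, EuclideanSpace ℂ (Fin L)) n‖ ≤
          C / (1 + zEucNorm (n - m) ^ α) * ‖v‖)
    (ψ : lp (fun _ : Fin d → ℤ => EuclideanSpace ℂ (Fin L)) 2)
    (hψ : Summable fun n : Fin d → ℤ =>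
        zEucNorm n ^ 2 * ‖(ψ : ∀ _ : Fin d → ℤ, EuclideanSpace ℂ (Fin L)) n‖ ^ 2) :
    Summable fun n : Fin d → ℤ =>
        zEucNorm n ^ 2 * ‖(H ψ : ∀ _ : Fin d → ℤ, EuclideanSpace ℂ (Fin L)) n‖ ^ 2 := by
  set c := max C 0
  have hc : 0 ≤ c := le_max_right C 0
  have hα' : (d : ℝ) + 1 < α := by linarith
  have hK : ∀ n m v, ‖(H (lp.single 2 m v) : ∀ _ : Fin d → ℤ, _) n‖ ≤
      c / (1 + zEucNorm (n - m) ^ α) * ‖v‖ := fun n m v =>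
    (hshort n m v).trans (by gcongr; exacts [(one_add_zEucNorm_rpow_pos α _).le, le_max_left C 0])
  have hu : Summable fun m => ((1 + zEucNorm m) * ‖(ψ : ∀ _ : Fin d → ℤ, _) m‖) ^ 2 :=
    summable_one_add_mul_sq (by simpa using (lp.hasSum_norm (by norm_num) ψ).summable)
      (by simpa only [mul_pow] using hψ)
  refine (summable_sq_tsum_sub_mul (shortRangeWeight_nonneg hc) (summable_shortRangeWeight hα')
    (fun m => by positivity [zEucNorm_nonneg m]) hu).of_nonneg_of_le (fun n => by positivity)
    fun n => ?_
  rw [← mul_pow]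
  exact pow_le_pow_left₀ (by positivity [zEucNorm_nonneg n])
    ((mul_le_mul_of_nonneg_right (by linarith) (norm_nonneg _)).trans
      (one_add_zEucNorm_mul_norm_apply_le hc hα' H hK ψ hu n)) 2
end

section
/- Let P be a bounded idempotent (P² = P) on a Hilbert space. Then P commutes with (P* − P)², the operator 1 − (P* − P)² is positive and invertible, and Q = P(1 − (P*−P)²)^{-1} P* = P(P*P)^{-1}P* is the orthogonal projection onto the range of P. -/
/-!
For idempotents `p`, `q` in any ring, `(1 - (q - p)²) p = p q p = p (1 - (q - p)²)`. Taking
`q = P*`, the operator `A = P* - P` is skew-adjoint, so `T = 1 - A² = 1 + A* A` is strictly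
positive, and it commutes with `P`. Then `Q = P T⁻¹ P*` satisfies `Q P = T⁻¹ P P* P = P`;
together with `Q = P (T⁻¹ P*)` this makes `Q` an idempotent with the range of `P`, and `Q` is
self-adjoint because `T` is.
-/

open ContinuousLinearMap

lemma Commute.ringInverse_right {M₀ : Type*} [MonoidWithZero M₀] {a b : M₀} (h : Commute a b) :
    Commute a (Ring.inverse b) := by
  by_cases hb : IsUnit b
  · lift b to M₀ˣ using hb
    rw [Ring.inverse_unit]
    exact h.units_inv_right
  · rw [Ring.inverse_non_unit _ hb]
    exact Commute.zero_right a

section Idempotent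

variable {R : Type*} [Ring R] {p q : R}

lemma IsIdempotentElem.sub_sq_mul (hp : IsIdempotentElem p) (hq : IsIdempotentElem q) :
    (q - p) ^ 2 * p = p - p * q * p := by
  simp only [sq, sub_mul, mul_sub, hp.eq, hq.eq, mul_assoc]
  noncomm_ring

lemma IsIdempotentElem.mul_sub_sq (hp : IsIdempotentElem p) (hq : IsIdempotentElem q) :
    p * (q - p) ^ 2 = p - p * q * p := by
  simp only [sq, sub_mul, mul_sub, hp.eq, hq.eq, ← mul_assoc]
  noncomm_ring

lemma IsIdempotentElem.commute_sub_sq (hp : IsIdempotentElem p) (hq : IsIdempotentElem q) :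
    Commute p ((q - p) ^ 2) :=
  (hp.mul_sub_sq hq).trans (hp.sub_sq_mul hq).symm

lemma IsIdempotentElem.one_sub_sub_sq_mul (hp : IsIdempotentElem p) (hq : IsIdempotentElem q) :
    (1 - (q - p) ^ 2) * p = p * q * p := by
  rw [sub_mul, hp.sub_sq_mul hq, one_mul, sub_sub_cancel]

lemma IsIdempotentElem.mul_ringInverse_mul_mul_self (hp : IsIdempotentElem p)
    (hq : IsIdempotentElem q) (hT : IsUnit (1 - (q - p) ^ 2)) :
    p * (Ring.inverse (1 - (q - p) ^ 2) * q) * p = p := by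
  set T := 1 - (q - p) ^ 2
  have hpT : Commute p (Ring.inverse T) :=
    ((Commute.one_right p).sub_right (hp.commute_sub_sq hq)).ringInverse_right
  calc p * (Ring.inverse T * q) * p = Ring.inverse T * (p * q * p) := by
        rw [← mul_assoc, hpT.eq]; simp only [mul_assoc]
    _ = p := by rw [← hp.one_sub_sub_sq_mul hq, ← mul_assoc, Ring.inverse_mul_cancel _ hT, one_mul]

end Idempotent

lemma isStrictlyPositive_one_sub_star_sub_self_sq {A : Type*} [CStarAlgebra A] [PartialOrder A]
    [StarOrderedRing A] (a : A) : IsStrictlyPositive (1 - (star a - a) ^ 2) := by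
  have hskew : (star a - a) ^ 2 = -(star (star a - a) * (star a - a)) := by
    rw [star_sub, star_star, sq, ← neg_mul, neg_sub]
  rw [hskew, sub_neg_eq_add]
  exact isStrictlyPositive_one.add_nonneg (star_mul_self_nonneg _)

lemma ContinuousLinearMap.range_mul_eq_of_mul_mul_self {R M : Type*} [Semiring R]
    [AddCommMonoid M] [Module R M] [TopologicalSpace M] {f g : M →L[R] M} (h : f * g * f = f) :
    LinearMap.range ((f * g : M →L[R] M) : M →ₗ[R] M) = LinearMap.range (f : M →ₗ[R] M) := by
  refine le_antisymm (LinearMap.range_comp_le_range (g : M →ₗ[R] M) (f : M →ₗ[R] M)) ?_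
  conv_lhs => rw [← h]
  exact LinearMap.range_comp_le_range (f : M →ₗ[R] M) ((f * g : M →L[R] M) : M →ₗ[R] M)

/-- For a bounded idempotent `P` on a Hilbert space: `P` commutes with
`(P* − P)²`, the operator `1 − (P* − P)²` is positive and invertible, and
`Q = P (1 − (P*−P)²)⁻¹ P*` is the orthogonal projection onto the range of `P`,
i.e. `Q` is a selfadjoint idempotent with `Ran Q = Ran P`. -/
theorem idempotent_range_projection {H : Type*} [NormedAddCommGroup H]
    [InnerProductSpace ℂ H] [CompleteSpace H]
    (P : H →L[ℂ] H) (hP : P * P = P) :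
    P * (adjoint P - P) ^ 2 = (adjoint P - P) ^ 2 * P ∧
    ((1 : H →L[ℂ] H) - (adjoint P - P) ^ 2).IsPositive ∧
    IsUnit ((1 : H →L[ℂ] H) - (adjoint P - P) ^ 2) ∧
    (IsSelfAdjoint (P * Ring.inverse (1 - (adjoint P - P) ^ 2) * adjoint P) ∧
      (P * Ring.inverse (1 - (adjoint P - P) ^ 2) * adjoint P) *
        (P * Ring.inverse (1 - (adjoint P - P) ^ 2) * adjoint P) =
        P * Ring.inverse (1 - (adjoint P - P) ^ 2) * adjoint P ∧
      LinearMap.range ((P * Ring.inverse (1 - (adjoint P - P) ^ 2) * adjoint P : H →L[ℂ] H) : H →ₗ[ℂ] H) =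
        LinearMap.range (P : H →ₗ[ℂ] H)) := by
  have hp : IsIdempotentElem P := hP
  have hT := isStrictlyPositive_one_sub_star_sub_self_sq P
  have hQP := hp.mul_ringInverse_mul_mul_self hp.star hT.isUnit
  simp only [← star_eq_adjoint, mul_assoc P (Ring.inverse _)]
  refine ⟨hp.commute_sub_sq hp.star, (nonneg_iff_isPositive _).mp hT.nonneg, hT.isUnit,
    ?_, ?_, range_mul_eq_of_mul_mul_self hQP⟩
  · rw [← mul_assoc]
    exact hT.isSelfAdjoint.ringInverse.conjugate P
  · rw [← mul_assoc, hQP]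
end

section
/- Let P be a bounded idempotent and F₀ a unitary operator on a Hilbert space such that [P, F₀] and [P*, F₀] are compact. Then with R = P(1 − (P*−P)²)^{-1/2}, the commutator [R, F₀] is compact. -/
set_option synthInstance.maxHeartbeats 800000
set_option maxHeartbeats 1000000
open ContinuousLinearMap

section Aux

variable {H : Type*} [NormedAddCommGroup H]
    [InnerProductSpace ℂ H] [CompleteSpace H]

/-- The commutator-compactness predicate. -/
def CommK (F₀ A : H →L[ℂ] H) : Prop := IsCompactOperator ⇑(A * F₀ - F₀ * A)

variable {F₀ : H →L[ℂ] H}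

lemma commK_one : CommK F₀ 1 := by
  have : (1 : H →L[ℂ] H) * F₀ - F₀ * 1 = 0 := by simp
  rw [CommK, this]
  exact isCompactOperator_zero

lemma commK_add {A B : H →L[ℂ] H} (hA : CommK F₀ A) (hB : CommK F₀ B) :
    CommK F₀ (A + B) := by
  have : (A + B) * F₀ - F₀ * (A + B) = (A * F₀ - F₀ * A) + (B * F₀ - F₀ * B) := by noncomm_ring
  rw [CommK, this]
  exact hA.add hB

lemma commK_neg {A : H →L[ℂ] H} (hA : CommK F₀ A) : CommK F₀ (-A) := by
  have : (-A) * F₀ - F₀ * (-A) = -(A * F₀ - F₀ * A) := by noncomm_ring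
  rw [CommK, this]
  exact hA.neg

lemma commK_sub {A B : H →L[ℂ] H} (hA : CommK F₀ A) (hB : CommK F₀ B) :
    CommK F₀ (A - B) := by
  have h := commK_add hA (commK_neg hB)
  rwa [sub_eq_add_neg]

lemma commK_smul {A : H →L[ℂ] H} (c : ℝ) (hA : CommK F₀ A) : CommK F₀ (c • A) := by
  have : (c • A) * F₀ - F₀ * (c • A) = c • (A * F₀ - F₀ * A) := by
    simp [smul_mul_assoc, mul_smul_comm, smul_sub]
  rw [CommK, this]
  have h2 : ⇑(c • (A * F₀ - F₀ * A)) = c • ⇑(A * F₀ - F₀ * A) := rfl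
  rw [h2]
  exact hA.smul c

lemma comp_left_compact (A : H →L[ℂ] H) {C : H →L[ℂ] H}
    (hC : IsCompactOperator ⇑C) : IsCompactOperator ⇑(A * C) := by
  have : ⇑(A * C) = ⇑A ∘ ⇑C := rfl
  rw [this]
  exact hC.continuous_comp A.continuous

lemma comp_right_compact (B : H →L[ℂ] H) {C : H →L[ℂ] H}
    (hC : IsCompactOperator ⇑C) : IsCompactOperator ⇑(C * B) := by
  have : ⇑(C * B) = ⇑C ∘ ⇑B := rfl
  rw [this]
  exact hC.comp_clm B

lemma commK_mul {A B : H →L[ℂ] H} (hA : CommK F₀ A) (hB : CommK F₀ B) :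
    CommK F₀ (A * B) := by
  have : A * B * F₀ - F₀ * (A * B)
      = A * (B * F₀ - F₀ * B) + (A * F₀ - F₀ * A) * B := by noncomm_ring
  rw [CommK, this]
  exact (comp_left_compact A hB).add (comp_right_compact B hA)

lemma commK_pow {A : H →L[ℂ] H} (hA : CommK F₀ A) (n : ℕ) : CommK F₀ (A ^ n) := by
  induction n with
  | zero => simpa using (commK_one (F₀ := F₀))
  | succ n ih => rw [pow_succ]; exact commK_mul ih hA

lemma commK_aeval {A : H →L[ℂ] H} (hA : CommK F₀ A) (p : Polynomial ℝ) :
    CommK F₀ (Polynomial.aeval A p) := by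
  induction p using Polynomial.induction_on' with
  | add p q hp hq => rw [map_add]; exact commK_add hp hq
  | monomial n a =>
      rw [Polynomial.aeval_monomial]
      have : algebraMap ℝ (H →L[ℂ] H) a * A ^ n = a • A ^ n := by
        rw [Algebra.algebraMap_eq_smul_one, smul_mul_assoc, one_mul]
      rw [this]
      exact commK_smul a (commK_pow hA n)

lemma isClosed_commK : IsClosed {A : H →L[ℂ] H | CommK F₀ A} := by
  have hcont : Continuous fun A : H →L[ℂ] H => A * F₀ - F₀ * A := by
    exact ((continuous_id.mul continuous_const).sub (continuous_const.mul continuous_id))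
  exact isClosed_setOf_isCompactOperator.preimage hcont

/-- Commutator compactness passes through the continuous functional calculus. -/
lemma commK_cfc {N : H →L[ℂ] H} (hN : IsSelfAdjoint N) (hK : CommK F₀ N)
    {f : ℝ → ℝ} (hf : Continuous f) : CommK F₀ (cfc f N) := by
  set c : ℝ := ‖N‖ * ‖(1 : H →L[ℂ] H)‖ with hc
  set s : Set ℝ := Set.Icc (-c) c with hs
  have hsp : spectrum ℝ N ⊆ s := by
    intro x hx
    have := spectrum.norm_le_norm_mul_of_mem hx
    rw [Real.norm_eq_abs, abs_le] at this
    exact this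
  have hmem : cfc f N ∈ closure {A : H →L[ℂ] H | CommK F₀ A} := by
    rw [Metric.mem_closure_iff]
    intro ε hε
    -- approximate f by a polynomial on s
    have hdense := polynomialFunctions.topologicalClosure s
    set f' : C(s, ℝ) := (ContinuousMap.mk f hf).restrict s with hf'
    have hf'mem : f' ∈ closure (polynomialFunctions s : Set C(s, ℝ)) := by
      rw [← Subalgebra.topologicalClosure_coe, hdense]
      trivial
    rw [Metric.mem_closure_iff] at hf'mem
    obtain ⟨g, hg, hdist⟩ := hf'mem (ε / 2) (by linarith)
    obtain ⟨p, -, hp⟩ := hg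
    refine ⟨Polynomial.aeval N p, commK_aeval hK p, ?_⟩
    have key : ∀ x ∈ spectrum ℝ N, ‖f x - p.eval x‖ ≤ ε / 2 := by
      intro x hx
      have hxs : x ∈ s := hsp hx
      have := ContinuousMap.dist_lt_iff (by linarith : (0:ℝ) < ε / 2) |>.mp hdist ⟨x, hxs⟩
      rw [← hp] at this
      simp only [Real.dist_eq] at this
      have : |f x - p.eval x| < ε / 2 := by
        simpa [f', Polynomial.toContinuousMapOnAlgHom_apply,
          Polynomial.toContinuousMapOn, Polynomial.toContinuousMap,
          ContinuousMap.restrict] using this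
      rw [Real.norm_eq_abs]
      linarith
    rw [dist_eq_norm, ← cfc_polynomial p N,
      ← cfc_sub f (fun x => p.eval x) N hf.continuousOn
        (Polynomial.continuous p).continuousOn]
    have hb := norm_cfc_le (by linarith : (0:ℝ) ≤ ε / 2)
      (f := fun x => f x - p.eval x) (a := N) key
    linarith
  rwa [isClosed_commK.closure_eq] at hmem

end Aux

/-- Let `P` be a bounded idempotent and `F₀` a unitary on a Hilbert space
such that `[P, F₀]` and `[P*, F₀]` are compact.  Then with
`R = P (1 − (P*−P)²)^{-1/2}`, the commutator `[R, F₀]` is compact. -/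
theorem commutator_R_compact {H : Type*} [NormedAddCommGroup H]
    [InnerProductSpace ℂ H] [CompleteSpace H]
    (P F₀ : H →L[ℂ] H) (hP : P * P = P)
    (hF₀ : adjoint F₀ * F₀ = 1 ∧ F₀ * adjoint F₀ = 1)
    (hPF : IsCompactOperator ⇑(P * F₀ - F₀ * P))
    (hPsF : IsCompactOperator ⇑(adjoint P * F₀ - F₀ * adjoint P)) :
    IsCompactOperator
      ⇑((P * Ring.inverse (CFC.sqrt (1 - (adjoint P - P) ^ 2))) * F₀ -
        F₀ * (P * Ring.inverse (CFC.sqrt (1 - (adjoint P - P) ^ 2)))) := by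
  set D : H →L[ℂ] H := adjoint P - P with hD
  set N : H →L[ℂ] H := 1 - D ^ 2 with hN
  -- basic facts about N
  have hstarD : star D = -D := by
    simp only [hD, star_sub, star_eq_adjoint, adjoint_adjoint]
    abel
  have hNdecomp : N = 1 + star D * D := by
    rw [hstarD, hN, pow_two, neg_mul, ← sub_eq_add_neg]
  have hNsa : IsSelfAdjoint N := by
    rw [hNdecomp]
    exact (IsSelfAdjoint.one _).add (IsSelfAdjoint.star_mul_self D)
  have hNnonneg : (0 : H →L[ℂ] H) ≤ N := by
    rw [hNdecomp]
    calc (0 : H →L[ℂ] H) ≤ 1 := zero_le_one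
    _ ≤ 1 + star D * D := le_add_of_nonneg_right (star_mul_self_nonneg D)
  have hsp1 : ∀ x ∈ spectrum ℝ N, 1 ≤ x := by
    intro x hx
    rw [hNdecomp] at hx
    have h1 : (1 : H →L[ℂ] H) = algebraMap ℝ (H →L[ℂ] H) 1 := by simp
    rw [h1, ← spectrum.singleton_add_eq] at hx
    obtain ⟨a, ha, b, hb, hab⟩ := Set.mem_add.mp hx
    rw [Set.mem_singleton_iff] at ha
    have hbnn : 0 ≤ b := spectrum_nonneg_of_nonneg (star_mul_self_nonneg D) hb
    rw [← hab, ha]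
    linarith
  -- the inverse square root as a cfc
  set f : ℝ → ℝ := fun x => (Real.sqrt (max 1 x))⁻¹ with hf
  have hfc : Continuous f := by
    apply Continuous.inv₀
    · exact Real.continuous_sqrt.comp (continuous_const.max continuous_id)
    · intro x
      have : (1:ℝ) ≤ max 1 x := le_max_left 1 x
      have := Real.sqrt_le_sqrt this
      rw [Real.sqrt_one] at this
      positivity
  set T : H →L[ℂ] H := cfc f N with hT
  -- CFC.sqrt N = cfc Real.sqrt N
  set B : H →L[ℂ] H := cfc Real.sqrt N with hB
  have hBnn : (0 : H →L[ℂ] H) ≤ B := cfc_nonneg fun x _ => Real.sqrt_nonneg x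
  have hBB : B * B = N := by
    rw [hB, ← cfc_mul _ _ N Real.continuous_sqrt.continuousOn
      Real.continuous_sqrt.continuousOn]
    calc cfc (fun x => Real.sqrt x * Real.sqrt x) N
        = cfc (fun x : ℝ => x) N := by
          apply cfc_congr
          intro x hx
          exact Real.mul_self_sqrt (by linarith [hsp1 x hx])
      _ = N := cfc_id ℝ N
  have hsqrt : CFC.sqrt N = B := CFC.sqrt_unique hBB hBnn
  -- B * T = 1 = T * B
  have hprod : ∀ x ∈ spectrum ℝ N, Real.sqrt x * f x = 1 := by
    intro x hx
    have h1 : (1:ℝ) ≤ x := hsp1 x hx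
    have hmax : max 1 x = x := max_eq_right h1
    rw [hf]
    simp only [hmax]
    rw [mul_inv_cancel₀]
    have : (1:ℝ) ≤ Real.sqrt x := by
      rw [show (1:ℝ) = Real.sqrt 1 by simp]
      exact Real.sqrt_le_sqrt h1
    linarith
  have hBT : B * T = 1 := by
    rw [hB, hT, ← cfc_mul _ _ N Real.continuous_sqrt.continuousOn hfc.continuousOn]
    rw [cfc_congr hprod]
    exact cfc_const_one ℝ N
  have hTB : T * B = 1 := by
    rw [hB, hT, ← cfc_mul _ _ N hfc.continuousOn Real.continuous_sqrt.continuousOn]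
    have : ∀ x ∈ spectrum ℝ N, f x * Real.sqrt x = 1 := fun x hx => by
      rw [mul_comm]; exact hprod x hx
    rw [cfc_congr this]
    exact cfc_const_one ℝ N
  -- Ring.inverse (CFC.sqrt N) = T
  have hinv : Ring.inverse (CFC.sqrt N) = T := by
    rw [hsqrt]
    let u : (H →L[ℂ] H)ˣ := ⟨B, T, hBT, hTB⟩
    have : B = (u : H →L[ℂ] H) := rfl
    rw [this, Ring.inverse_unit u]
    rfl
  -- commutator-compactness assembly
  have hKP : CommK F₀ P := hPF
  have hKPs : CommK F₀ (adjoint P) := hPsF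
  have hKD : CommK F₀ D := commK_sub hKPs hKP
  have hKN : CommK F₀ N := commK_sub commK_one (commK_pow hKD 2)
  have hKT : CommK F₀ T := commK_cfc hNsa hKN hfc
  have hKR : CommK F₀ (P * T) := commK_mul hKP hKT
  rw [hinv]
  exact hKR
end

section
/- Let P be a bounded idempotent and F₀ a unitary on a Hilbert space with [P, F₀] and [P*, F₀] compact. Set R = P(1 − (P*−P)²)^{-1/2} and Q = RR*. Then T = R F₀ R* + (1 − Q) is a Fredholm operator, since T*T − 1 is compact. -/
set_option synthInstance.maxHeartbeats 800000

open ContinuousLinearMap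

/-- A bounded operator is Fredholm if it has finite-dimensional kernel, closed range,
and finite-dimensional cokernel. -/
def IsFredholmOp {H : Type*} [NormedAddCommGroup H] [InnerProductSpace ℂ H]
    [CompleteSpace H] (T : H →L[ℂ] H) : Prop :=
  FiniteDimensional ℂ (LinearMap.ker (T : H →ₗ[ℂ] H)) ∧
  IsClosed (LinearMap.range (T : H →ₗ[ℂ] H) : Set H) ∧
  FiniteDimensional ℂ (H ⧸ LinearMap.range (T : H →ₗ[ℂ] H))

/-!
Put `N = 1 - (P* - P)²`. As `P* - P` is skew-adjoint, `N = 1 + (P* - P)* (P* - P) ≥ 1`, so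
`N^{-1/2}` exists, and idempotency gives `P N = P P* P = N P`. Hence `N^{-1/2}` commutes with `P`
and `R = P N^{-1/2}` is a partial isometry: `R R* R = N^{-1} (P P* P) N^{-1/2} = R`.
For a partial isometry `R` and a unitary `F₀`, expanding gives `T*T - 1 = R F₀* [R*R, F₀] R*`,
and `T T* - 1` is the same expression for `F₀*`. The operators whose commutator with `F₀` is
compact form a norm-closed algebra; it contains `P` and `P*`, hence `N`, hence (continuous
functional calculus) `N^{-1/2}`, hence `R*R`.
Finally, once `T*T - 1` and `TT* - 1` are compact, `ker T` and `ker T*` lie in `-1`-eigenspaces of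
compact operators, and the Fredholm alternative for `T*T - 1` on `(ker T)ᗮ` bounds `T` below
there, so the range of `T` is closed.
-/

open scoped NNReal

section StarRing

variable {A : Type*} [Ring A] [StarRing A]

lemma mul_one_sub_sq_star_sub_of_isIdempotentElem {P : A} (hP : IsIdempotentElem P) :
    P * (1 - (star P - P) ^ 2) = P * star P * P := by
  have : P * (1 - (star P - P) ^ 2) =
      P - P * (star P * star P) + P * star P * P + P * P * star P - P * P * P := by noncomm_ring
  simp only [this, hP.star.eq, hP.eq]
  abel

lemma one_sub_sq_star_sub_mul_of_isIdempotentElem {P : A} (hP : IsIdempotentElem P) :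
    (1 - (star P - P) ^ 2) * P = P * star P * P := by
  have : (1 - (star P - P) ^ 2) * P =
      P - star P * star P * P + star P * (P * P) + P * star P * P - P * P * P := by noncomm_ring
  simp only [this, hP.star.eq, hP.eq]
  abel

lemma commute_one_sub_sq_star_sub_of_isIdempotentElem {P : A} (hP : IsIdempotentElem P) :
    Commute P (1 - (star P - P) ^ 2) :=
  (mul_one_sub_sq_star_sub_of_isIdempotentElem hP).trans
    (one_sub_sq_star_sub_mul_of_isIdempotentElem hP).symm

lemma mul_star_mul_self_of_commute {P M : A} (hP : IsIdempotentElem P)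
    (hM : IsSelfAdjoint M) (hPM : Commute P M) (hMN : M * M * (1 - (star P - P) ^ 2) = 1) :
    P * M * star (P * M) * (P * M) = P * M := by
  have hPMM : P * (M * M) = M * M * P := (hPM.mul_right hPM).eq
  calc P * M * star (P * M) * (P * M) = P * (M * M) * (star P * P) * M := by
        rw [star_mul, hM.star_eq]; noncomm_ring
    _ = M * M * (P * star P * P) * M := by rw [hPMM]; noncomm_ring
    _ = M * M * (1 - (star P - P) ^ 2) * P * M := by
        rw [← one_sub_sq_star_sub_mul_of_isIdempotentElem hP]; noncomm_ring
    _ = P * M := by rw [hMN, one_mul]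

lemma star_mul_add_one_sub (R F : A) :
    star (R * F * star R + (1 - R * star R)) = R * star F * star R + (1 - R * star R) := by
  simp only [star_add, star_sub, star_one, star_mul, star_star, mul_assoc]

lemma star_mul_self_sub_one_of_mul_star_mul_self {R F : A} (hR : R * star R * R = R)
    (hF : star F * F = 1) :
    star (R * F * star R + (1 - R * star R)) * (R * F * star R + (1 - R * star R)) - 1 =
      R * star F * (star R * R * F - F * (star R * R)) * star R := by
  have hR' : star R * R * star R = star R := by
    simpa only [star_mul, star_star, mul_assoc] using congrArg star hR
  rw [star_mul_add_one_sub, ← sub_eq_zero]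
  have key : (R * star F * star R + (1 - R * star R)) * (R * F * star R + (1 - R * star R)) - 1 -
        R * star F * (star R * R * F - F * (star R * R)) * star R =
      R * star F * (star R - star R * R * star R) + (R - R * star R * R) * F * star R
        - 2 * ((R - R * star R * R) * star R) + R * (star F * F - 1) * (star R * R * star R) := by
    noncomm_ring
  rw [key, hR, hR', hF]
  noncomm_ring

end StarRing

section ElementalSubset

variable {R A : Type*} [CommSemiring R] [StarRing R] [TopologicalSpace A] [Semiring A]
  [StarRing A] [IsSemitopologicalSemiring A] [ContinuousStar A] [Algebra R A] [StarModule R A]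

lemma StarAlgebra.elemental_subset_of_isClosed (S : Subalgebra R A) (hS : IsClosed (S : Set A))
    {a : A} (ha : a ∈ S) (ha' : star a ∈ S) : (StarAlgebra.elemental R a : Set A) ⊆ S := by
  refine closure_minimal (fun x hx => ?_) hS
  rw [SetLike.mem_coe, ← StarSubalgebra.mem_toSubalgebra, StarAlgebra.adjoin_toSubalgebra] at hx
  refine Algebra.adjoin_le ?_ hx
  rintro _ (rfl | h)
  · exact ha
  · rw [← h, star_star] at ha'
    exact ha'

end ElementalSubset

section CStarAlgebra

variable {A : Type*} [CStarAlgebra A] [PartialOrder A] [StarOrderedRing A]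

lemma isStrictlyPositive_one_sub_sq_star_sub (P : A) :
    IsStrictlyPositive (1 - (star P - P) ^ 2) := by
  have : 1 - (star P - P) ^ 2 = 1 + star (star P - P) * (star P - P) := by
    rw [star_sub, star_star]; noncomm_ring
  rw [this]
  exact isStrictlyPositive_one.add_nonneg (star_mul_self_nonneg _)

lemma CFC.ringInverse_sqrt_eq_rpow {a : A} (ha : IsStrictlyPositive a) :
    Ring.inverse (CFC.sqrt a) = a ^ (-(1 / 2) : ℝ) := by
  rw [CFC.sqrt_eq_rpow, CFC.inverse_rpow a _ (by norm_num) ha]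

lemma CFC.rpow_mem_elemental {a : A} (ha : 0 ≤ a) (y : ℝ) :
    a ^ y ∈ StarAlgebra.elemental ℝ a := by
  rw [CFC.rpow_def, cfc_nnreal_eq_real _ a ha]
  exact cfc_mem_elemental _ a

lemma CFC.rpow_neg_half_mul_rpow_neg_half_mul_self {a : A} (ha : IsStrictlyPositive a) :
    a ^ (-(1 / 2) : ℝ) * a ^ (-(1 / 2) : ℝ) * a = 1 :=
  calc a ^ (-(1 / 2) : ℝ) * a ^ (-(1 / 2) : ℝ) * a = a ^ (-1 : ℝ) * a ^ (1 : ℝ) := by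
        rw [← CFC.rpow_add ha.isUnit, CFC.rpow_one a ha.nonneg]; norm_num
    _ = 1 := CFC.rpow_neg_mul_rpow 1 ha

lemma mul_star_mul_self_of_isIdempotentElem {P : A} (hP : IsIdempotentElem P) :
    letI R := P * (1 - (star P - P) ^ 2) ^ (-(1 / 2) : ℝ)
    R * star R * R = R := by
  have hN := isStrictlyPositive_one_sub_sq_star_sub P
  exact mul_star_mul_self_of_commute hP (hN.rpow _ _).isSelfAdjoint
    ((commute_one_sub_sq_star_sub_of_isIdempotentElem hP).symm.cfc_nnreal _).symm
    (CFC.rpow_neg_half_mul_rpow_neg_half_mul_self hN)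

lemma star_mul_self_mem_of_isClosed {P : A} (S : Subalgebra ℝ A) (hS : IsClosed (S : Set A))
    (hP : P ∈ S) (hP' : star P ∈ S) :
    letI R := P * (1 - (star P - P) ^ 2) ^ (-(1 / 2) : ℝ)
    star R * R ∈ S := by
  have hN := isStrictlyPositive_one_sub_sq_star_sub P
  have hNS : 1 - (star P - P) ^ 2 ∈ S := sub_mem (one_mem _) (pow_mem (sub_mem hP' hP) 2)
  have hMS : (1 - (star P - P) ^ 2) ^ (-(1 / 2) : ℝ) ∈ S :=
    StarAlgebra.elemental_subset_of_isClosed S hS hNS (by rwa [hN.isSelfAdjoint.star_eq])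
      (CFC.rpow_mem_elemental hN.nonneg _)
  rw [star_mul, (hN.rpow _ _).isSelfAdjoint.star_eq]
  exact mul_mem (mul_mem hMS hP') (mul_mem hP hMS)

end CStarAlgebra

section EssentialCommutant

variable {𝕜 E : Type*} [NontriviallyNormedField 𝕜] [NormedAddCommGroup E] [NormedSpace 𝕜 E]

lemma IsCompactOperator.mul_mul (A B : E →L[𝕜] E) {K : E →L[𝕜] E} (hK : IsCompactOperator K) :
    IsCompactOperator (A * K * B) :=
  (hK.clm_comp A).comp_clm B

def essentialCommutant (F : E →L[𝕜] E) : Subalgebra 𝕜 (E →L[𝕜] E) where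
  carrier := {B | IsCompactOperator (B * F - F * B)}
  mul_mem' {a b} ha hb := by
    show IsCompactOperator (a * b * F - F * (a * b))
    rw [show a * b * F - F * (a * b) = a * (b * F - F * b) * 1 + 1 * (a * F - F * a) * b by
      noncomm_ring]
    exact (hb.mul_mul a 1).add (ha.mul_mul 1 b)
  add_mem' {a b} ha hb := by
    show IsCompactOperator ((a + b) * F - F * (a + b))
    rw [show (a + b) * F - F * (a + b) = (a * F - F * a) + (b * F - F * b) by noncomm_ring]
    exact ha.add hb
  algebraMap_mem' c := by
    show IsCompactOperator ⇑(algebraMap 𝕜 (E →L[𝕜] E) c * F - F * algebraMap 𝕜 _ c)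
    rw [Algebra.commutes c F, sub_self]
    exact isCompactOperator_zero

lemma mem_essentialCommutant {F B : E →L[𝕜] E} :
    B ∈ essentialCommutant F ↔ IsCompactOperator (B * F - F * B) :=
  Iff.rfl

lemma isClosed_essentialCommutant [CompleteSpace E] (F : E →L[𝕜] E) :
    IsClosed (essentialCommutant F : Set (E →L[𝕜] E)) :=
  isClosed_setOfPred_isCompactOperator.preimage
    ((continuous_mul_const F).sub (continuous_const_mul F))

lemma essentialCommutant_le_of_mul_eq_one {F G : E →L[𝕜] E} (hGF : G * F = 1) (hFG : F * G = 1) :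
    essentialCommutant F ≤ essentialCommutant G := fun B hB => by
  have : B * G - G * B = -(G * (B * F - F * B) * G) := by
    rw [show G * (B * F - F * B) * G = G * B * (F * G) - G * F * B * G by noncomm_ring, hFG, hGF]
    noncomm_ring
  rw [mem_essentialCommutant, this]
  exact (hB.mul_mul G G).neg

end EssentialCommutant

section Fredholm

variable {𝕜 E : Type*} [RCLike 𝕜] [NormedAddCommGroup E] [InnerProductSpace 𝕜 E] [CompleteSpace E]

lemma isCompactOperator_star_mul_self_sub_one {R F : E →L[𝕜] E} (hR : R * star R * R = R)
    (hF : star F * F = 1) (hRF : star R * R ∈ essentialCommutant F) :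
    IsCompactOperator ⇑(star (R * F * star R + (1 - R * star R)) *
      (R * F * star R + (1 - R * star R)) - 1) := by
  rw [star_mul_self_sub_one_of_mul_star_mul_self hR hF]
  exact hRF.mul_mul _ _

lemma finiteDimensional_ker_of_isCompactOperator {T : E →L[𝕜] E}
    (hT : IsCompactOperator ⇑(adjoint T * T - 1)) : FiniteDimensional 𝕜 T.ker := by
  have hle : T.ker ≤ Module.End.eigenspace (adjoint T * T - 1 : E →L[𝕜] E).toLinearMap (-1) :=
    fun x hx => by simp_all
  have := finite_dimensional_eigenspace hT (-1) (by norm_num)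
  exact Submodule.finiteDimensional_of_le hle

lemma exists_norm_le_mul_norm_of_mem_orthogonal_ker {T : E →L[𝕜] E}
    (hT : IsCompactOperator ⇑(adjoint T * T - 1)) :
    ∃ c : ℝ≥0, ∀ v ∈ T.kerᗮ, ‖v‖ ≤ c * ‖T v‖ := by
  set K := adjoint T * T - 1
  have hV : ∀ v ∈ T.kerᗮ, K v ∈ T.kerᗮ := fun v hv => by
    refine sub_mem ?_ hv
    rw [orthogonal_ker]
    exact Submodule.le_topologicalClosure _ ⟨T v, rfl⟩
  have hKV : IsCompactOperator ⇑(K.restrict hV) := hT.restrict' hV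
  have hnot : ¬ Module.End.HasEigenvalue (K.restrict hV : Module.End 𝕜 T.kerᗮ) (-1) := by
    intro h
    obtain ⟨v, hv⟩ := h.exists_hasEigenvector
    have hKv : K v = -v := by simpa using congrArg Subtype.val hv.apply_eq_smul
    have hTv : (v : E) ∈ (adjoint T ∘L T).ker := by
      rw [LinearMap.mem_ker]
      simpa [K, sub_eq_neg_self] using hKv
    rw [ker_adjoint_comp_self] at hTv
    have hv0 : (v : E) ∈ T.ker ⊓ T.kerᗮ := ⟨hTv, v.2⟩
    rw [Submodule.inf_orthogonal_eq_bot, Submodule.mem_bot] at hv0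
    exact hv.2 (Subtype.ext hv0)
  obtain ⟨c, hc⟩ := hKV.antilipschitz_of_not_hasEigenvalue (by norm_num) hnot
  refine ⟨c * ‖adjoint T‖₊, fun v hv => ?_⟩
  calc ‖v‖ = ‖(⟨v, hv⟩ : T.kerᗮ)‖ := rfl
    _ ≤ c * ‖(K.restrict hV - (-1 : 𝕜) • 1) ⟨v, hv⟩‖ := hc.le_mul_norm (map_zero _) _
    _ = c * ‖adjoint T (T v)‖ := by simp [K]
    _ ≤ c * (‖adjoint T‖ * ‖T v‖) := by gcongr; exact le_opNorm _ _
    _ = _ := by push_cast; ring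

lemma isClosed_range_of_norm_le_mul_norm {T : E →L[𝕜] E} {c : ℝ≥0}
    (h : ∀ v ∈ T.kerᗮ, ‖v‖ ≤ c * ‖T v‖) : IsClosed (T.range : Set E) := by
  have hanti : AntilipschitzWith c (T ∘L T.kerᗮ.subtypeL) :=
    antilipschitz_of_bound _ fun v => h v v.2
  have hrange : T.kerᗮ.map (T : E →ₗ[𝕜] E) = T.range :=
    Submodule.map_eq_range_iff.mpr (Submodule.isCompl_orthogonal _).symm.codisjoint
  have hset : (T.range : Set E) = Set.range (T ∘L T.kerᗮ.subtypeL) := by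
    rw [← hrange, Submodule.map_coe, coe_comp, Set.range_comp]
    simp
  rw [hset]
  exact hanti.isClosed_range (T ∘L T.kerᗮ.subtypeL).uniformContinuous

lemma finiteDimensional_quotient_range_of_isCompactOperator {T : E →L[𝕜] E}
    (hclosed : IsClosed (T.range : Set E)) (hT : IsCompactOperator ⇑(T * adjoint T - 1)) :
    FiniteDimensional 𝕜 (E ⧸ T.range) := by
  have : CompleteSpace T.range := hclosed.completeSpace_coe
  have : FiniteDimensional 𝕜 T.rangeᗮ := by
    rw [orthogonal_range]
    exact finiteDimensional_ker_of_isCompactOperator (by rwa [adjoint_adjoint])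
  exact Module.Finite.equiv (Submodule.quotientEquivOfIsCompl _ _
    (Submodule.isCompl_orthogonal _)).symm

theorem isFredholmOp_of_isCompactOperator {H : Type*} [NormedAddCommGroup H]
    [InnerProductSpace ℂ H] [CompleteSpace H] {T : H →L[ℂ] H}
    (h₁ : IsCompactOperator ⇑(adjoint T * T - 1)) (h₂ : IsCompactOperator ⇑(T * adjoint T - 1)) :
    IsFredholmOp T := by
  obtain ⟨c, hc⟩ := exists_norm_le_mul_norm_of_mem_orthogonal_ker h₁
  have hclosed := isClosed_range_of_norm_le_mul_norm hc
  exact ⟨finiteDimensional_ker_of_isCompactOperator h₁, hclosed,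
    finiteDimensional_quotient_range_of_isCompactOperator hclosed h₂⟩

end Fredholm

/-- Let `P` be a bounded idempotent and `F₀` a unitary with `[P, F₀]` and
`[P*, F₀]` compact.  Set `R = P (1 − (P*−P)²)^{-1/2}` and `Q = R R*`.  Then
`T = R F₀ R* + (1 − Q)` is Fredholm, since `T*T − 1` is compact. -/
theorem T_is_Fredholm {H : Type*} [NormedAddCommGroup H]
    [InnerProductSpace ℂ H] [CompleteSpace H]
    (P F₀ : H →L[ℂ] H) (hP : P * P = P)
    (hF₀ : adjoint F₀ * F₀ = 1 ∧ F₀ * adjoint F₀ = 1)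
    (hPF : IsCompactOperator ⇑(P * F₀ - F₀ * P))
    (hPsF : IsCompactOperator ⇑(adjoint P * F₀ - F₀ * adjoint P)) :
    letI R := P * Ring.inverse (CFC.sqrt (1 - (adjoint P - P) ^ 2))
    letI T := R * F₀ * adjoint R + (1 - R * adjoint R)
    IsCompactOperator ⇑(adjoint T * T - 1) ∧ IsFredholmOp T := by
  obtain ⟨hF₁, hF₂⟩ := hF₀
  simp only [← star_eq_adjoint] at hF₁ hF₂ hPsF ⊢
  rw [CFC.ringInverse_sqrt_eq_rpow (isStrictlyPositive_one_sub_sq_star_sub P)]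
  set R := P * (1 - (star P - P) ^ 2) ^ (-(1 / 2) : ℝ)
  have hR : R * star R * R = R := mul_star_mul_self_of_isIdempotentElem hP
  have hRF : star R * R ∈ essentialCommutant F₀ :=
    star_mul_self_mem_of_isClosed ((essentialCommutant F₀).restrictScalars ℝ)
      (isClosed_essentialCommutant F₀) hPF hPsF
  have h₁ := isCompactOperator_star_mul_self_sub_one hR hF₁ hRF
  have h₂ : IsCompactOperator ⇑((R * F₀ * star R + (1 - R * star R)) *
      star (R * F₀ * star R + (1 - R * star R)) - 1) := by
    have := isCompactOperator_star_mul_self_sub_one hR (F := star F₀) (by rwa [star_star])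
      (essentialCommutant_le_of_mul_eq_one hF₁ hF₂ hRF)
    rwa [star_mul_add_one_sub, star_star, ← star_mul_add_one_sub] at this
  exact ⟨h₁, isFredholmOp_of_isCompactOperator (by rwa [← star_eq_adjoint])
    (by rwa [← star_eq_adjoint])⟩
end

section
/- Let H be a complex matrix with no spectrum on the imaginary axis, P the Riesz projection onto the spectrum with negative real part, and J a selfadjoint unitary with JHJ = −H. Then JPJ = 1 − P, and in the spectral representation of J the idempotent P takes the form P = (1/2)[[1, W],[V, 1]] with VW = 1 and WV = 1. -/
/-!
Because `J` anticommutes with `H`, it maps the generalized eigenspace of `H` for `μ` onto the one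
for `-μ`. Hence `JPJ` is an idempotent with range `ker P` and kernel `range P`, and since an
idempotent is determined by its range and kernel, `JPJ = 1 - P`. For `J = diag(1, -1)` this
says that the diagonal blocks of `P` are `1/2`, and then `P² = P` forces twice the
off-diagonal blocks to be mutually inverse.
-/

namespace Module.End

variable {R M : Type*} [CommRing R] [AddCommGroup M] [Module R M]

lemma mapsTo_maxGenEigenspace_of_semiconjBy {f g J : End R M} (h : SemiconjBy J f g) (μ : R) :
    Set.MapsTo J (f.maxGenEigenspace μ) (g.maxGenEigenspace μ) := by
  intro x hx
  rw [SetLike.mem_coe, mem_maxGenEigenspace] at hx ⊢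
  obtain ⟨k, hk⟩ := hx
  have hμ : SemiconjBy J (f - μ • 1) (g - μ • 1) :=
    h.sub_right ((Commute.one_right J).smul_right μ)
  refine ⟨k, ?_⟩
  rw [← mul_apply, ← (hμ.pow_right k).eq, mul_apply, hk, map_zero]

lemma maxGenEigenspace_neg (f : End R M) (μ : R) :
    (-f).maxGenEigenspace μ = f.maxGenEigenspace (-μ) := by
  ext x
  have hshift : -f - μ • 1 = (-1 : R) • (f - (-μ) • 1) := by module
  simp only [mem_maxGenEigenspace, hshift, smul_pow, LinearMap.smul_apply,
    (isUnit_neg_one.pow _).smul_eq_zero]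

lemma map_maxGenEigenspace_of_anticommute {f J : End R M} (hJ : Function.Involutive J)
    (h : J * f = -f * J) (μ : R) :
    (f.maxGenEigenspace μ).map J = f.maxGenEigenspace (-μ) := by
  have h' : SemiconjBy J (-f) f := by
    rw [SemiconjBy, mul_neg, h, neg_mul, neg_neg]
  apply le_antisymm
  · rw [Submodule.map_le_iff_le_comap, ← maxGenEigenspace_neg]
    exact mapsTo_maxGenEigenspace_of_semiconjBy h μ
  · intro x hx
    rw [← maxGenEigenspace_neg] at hx
    exact ⟨J x, mapsTo_maxGenEigenspace_of_semiconjBy h' μ hx, hJ x⟩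

lemma map_iSup_maxGenEigenspace_of_anticommute {f J : End R M} (hJ : Function.Involutive J)
    (h : J * f = -f * J) (S : Set R) :
    (⨆ μ ∈ S, f.maxGenEigenspace μ).map J = ⨆ μ ∈ -S, f.maxGenEigenspace μ := by
  simp_rw [Submodule.map_iSup, map_maxGenEigenspace_of_anticommute hJ h, ← Set.image_neg_eq_neg,
    iSup_image]

end Module.End

namespace LinearMap

variable {R M : Type*} [Ring R] [AddCommGroup M] [Module R M]

lemma range_mul_mul_of_involutive {J : Module.End R M} (hJ : Function.Involutive J)
    (P : Module.End R M) : range (J * P * J) = (range P).map J := by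
  rw [Module.End.mul_eq_comp, Module.End.mul_eq_comp, range_comp,
    range_eq_top_of_surjective J hJ.surjective, Submodule.map_top, range_comp]

lemma ker_mul_mul_of_involutive {J : Module.End R M} (hJ : Function.Involutive J)
    (P : Module.End R M) : ker (J * P * J) = (ker P).map J := by
  ext x
  simp only [mem_ker, Module.End.mul_apply, Submodule.mem_map]
  constructor
  · intro hx
    exact ⟨J x, by simpa [hJ _] using congrArg J hx, hJ x⟩
  · rintro ⟨y, hy, rfl⟩
    rw [hJ, hy, map_zero]

end LinearMap

namespace Module.End

open LinearMap

theorem mul_mul_eq_one_sub_of_anticommute {R M : Type*} [CommRing R] [AddCommGroup M]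
    [Module R M] {f J P : End R M} (hJ : J * J = 1) (h : J * f = -f * J)
    (hP : IsIdempotentElem P) (S : Set R) (hran : range P = ⨆ μ ∈ S, f.maxGenEigenspace μ)
    (hker : ker P = ⨆ μ ∈ -S, f.maxGenEigenspace μ) :
    J * P * J = 1 - P := by
  have hinv : Function.Involutive J := fun x => by rw [← mul_apply, hJ, one_apply]
  have hconj : IsIdempotentElem (J * P * J) := by
    rw [IsIdempotentElem, show J * P * J * (J * P * J) = J * (P * (J * J) * P) * J by
      simp only [mul_assoc], hJ, mul_one, hP.eq]
  refine IsIdempotentElem.ext hconj hP.one_sub ⟨?_, ?_⟩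
  · rw [range_mul_mul_of_involutive hinv, ← IsIdempotentElem.ker_eq_range_one_sub hP, hran, hker,
      map_iSup_maxGenEigenspace_of_anticommute hinv h]
  · rw [ker_mul_mul_of_involutive hinv, ← IsIdempotentElem.range_eq_ker_one_sub hP, hran, hker,
      map_iSup_maxGenEigenspace_of_anticommute hinv h, neg_neg]

end Module.End

namespace Matrix

variable {m n α : Type*} [Fintype m] [Fintype n] [DecidableEq m] [DecidableEq n]

theorem fromBlocks_one_neg_one_mul_mul [Ring α] (A : Matrix m m α) (B : Matrix m n α)
    (C : Matrix n m α) (D : Matrix n n α) :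
    fromBlocks 1 0 0 (-1) * fromBlocks A B C D * fromBlocks 1 0 0 (-1) =
      fromBlocks A (-B) (-C) D := by
  simp [fromBlocks_multiply]

theorem exists_eq_half_fromBlocks_of_mul_mul_eq_one_sub [Field α] [NeZero (2 : α)]
    {P : Matrix (m ⊕ n) (m ⊕ n) α}
    (hP : fromBlocks 1 0 0 (-1) * P * fromBlocks 1 0 0 (-1) = 1 - P) :
    ∃ (W : Matrix m n α) (V : Matrix n m α), P = (2 : α)⁻¹ • fromBlocks 1 W V 1 := by
  rw [← fromBlocks_toBlocks P, fromBlocks_one_neg_one_mul_mul, ← fromBlocks_one, sub_eq_add_neg,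
    fromBlocks_neg, fromBlocks_add, fromBlocks_inj] at hP
  obtain ⟨hA, -, -, hD⟩ := hP
  refine ⟨(2 : α) • P.toBlocks₁₂, (2 : α) • P.toBlocks₂₁, ?_⟩
  conv_lhs => rw [← fromBlocks_toBlocks P]
  rw [fromBlocks_smul, smul_smul, smul_smul, inv_mul_cancel₀ two_ne_zero, one_smul, one_smul]
  congr 1
  · rw [eq_inv_smul_iff₀ two_ne_zero, two_smul]
    nth_rewrite 1 [hA]
    abel
  · rw [eq_inv_smul_iff₀ two_ne_zero, two_smul]
    nth_rewrite 1 [hD]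
    abel

theorem isIdempotentElem_half_fromBlocks_iff [Field α] [NeZero (2 : α)]
    (W : Matrix m n α) (V : Matrix n m α) :
    IsIdempotentElem ((2 : α)⁻¹ • fromBlocks 1 W V 1) ↔ V * W = 1 ∧ W * V = 1 := by
  rw [IsIdempotentElem, Matrix.smul_mul, Matrix.mul_smul, smul_right_inj (inv_ne_zero two_ne_zero),
    inv_smul_eq_iff₀ two_ne_zero, fromBlocks_multiply, fromBlocks_smul, fromBlocks_inj]
  simp only [two_smul, Matrix.mul_one, Matrix.one_mul, add_right_inj, add_left_inj, true_and]
  exact and_comm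

end Matrix

theorem riesz_projection_chiral_form_general {k l : ℕ}
    (H P : Matrix (Fin k ⊕ Fin l) (Fin k ⊕ Fin l) ℂ)
    (J : Matrix (Fin k ⊕ Fin l) (Fin k ⊕ Fin l) ℂ)
    (hJ : J = Matrix.fromBlocks 1 0 0 (-1))
    (hchiral : J * H * J = -H)
    (hP2 : P * P = P)
    (hran : LinearMap.range (Matrix.toLin' P) =
        ⨆ (μ : ℂ) (_ : μ.re < 0), Module.End.maxGenEigenspace (Matrix.toLin' H) μ)
    (hker : LinearMap.ker (Matrix.toLin' P) =
        ⨆ (μ : ℂ) (_ : 0 < μ.re), Module.End.maxGenEigenspace (Matrix.toLin' H) μ) :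
    J * P * J = 1 - P ∧
    ∃ (W : Matrix (Fin k) (Fin l) ℂ) (V : Matrix (Fin l) (Fin k) ℂ),
      P = (2 : ℂ)⁻¹ • Matrix.fromBlocks 1 W V 1 ∧ V * W = 1 ∧ W * V = 1 := by
  change IsIdempotentElem P at hP2
  have hJJ : J * J = 1 := by simp [hJ, Matrix.fromBlocks_multiply]
  have hanti : J * H = -H * J := by rw [← hchiral, mul_assoc _ J, hJJ, mul_one]
  have hneg : -{μ : ℂ | μ.re < 0} = {μ | 0 < μ.re} := by ext; simp
  have hJPJ : J * P * J = 1 - P := by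
    apply Matrix.toLinAlgEquiv'.injective
    simp only [map_mul, map_sub, map_one]
    refine Module.End.mul_mul_eq_one_sub_of_anticommute (f := Matrix.toLinAlgEquiv' H)
      (by rw [← map_mul, hJJ, map_one]) (by rw [← map_mul, hanti, map_mul, map_neg])
      (hP2.map Matrix.toLinAlgEquiv') {μ | μ.re < 0} hran ?_
    rwa [hneg]
  obtain ⟨W, V, hPWV⟩ := Matrix.exists_eq_half_fromBlocks_of_mul_mul_eq_one_sub (hJ ▸ hJPJ)
  rw [hPWV, Matrix.isIdempotentElem_half_fromBlocks_iff] at hP2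
  exact ⟨hJPJ, W, V, hPWV, hP2⟩

/-- Let `H` be a complex matrix with no spectrum on the imaginary axis,
`P` the Riesz projection onto the spectrum with negative real part (characterized as
the idempotent commuting with `H` whose range is the sum of the generalized
eigenspaces of eigenvalues with negative real part and whose kernel is that for
positive real part), and `J` a selfadjoint unitary with `JHJ = −H`, written in its
spectral representation `J = diag(1, −1)`.  Then `JPJ = 1 − P` and
`P = ½ [[1, W], [V, 1]]` with `VW = 1` and `WV = 1`. -/
theorem riesz_projection_chiral_form {k l : ℕ}
    (H P : Matrix (Fin k ⊕ Fin l) (Fin k ⊕ Fin l) ℂ)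
    (J : Matrix (Fin k ⊕ Fin l) (Fin k ⊕ Fin l) ℂ)
    (hJ : J = Matrix.fromBlocks 1 0 0 (-1))
    (hspec : ∀ z ∈ spectrum ℂ H, z.re ≠ 0)
    (hchiral : J * H * J = -H)
    (hP2 : P * P = P)
    (hPH : P * H = H * P)
    (hran : LinearMap.range (Matrix.toLin' P) =
        ⨆ (μ : ℂ) (_ : μ.re < 0), Module.End.maxGenEigenspace (Matrix.toLin' H) μ)
    (hker : LinearMap.ker (Matrix.toLin' P) =
        ⨆ (μ : ℂ) (_ : 0 < μ.re), Module.End.maxGenEigenspace (Matrix.toLin' H) μ) :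
    J * P * J = 1 - P ∧
    ∃ (W : Matrix (Fin k) (Fin l) ℂ) (V : Matrix (Fin l) (Fin k) ℂ),
      P = (2 : ℂ)⁻¹ • Matrix.fromBlocks 1 W V 1 ∧ V * W = 1 ∧ W * V = 1 :=
  riesz_projection_chiral_form_general H P J hJ hchiral hP2 hran hker
end

section
/- Let H be a complex N×N matrix with no spectrum on the imaginary axis and JHJ = −H for a selfadjoint unitary J, and let P be the Riesz projection onto the spectrum with negative real part. Then the path t ∈ [0,1] ↦ H_t = ∮_γ dz/(2πi) ((1−t)z − t)(z−H)^{-1} + ∮_{−γ} dz/(2πi) ((1−t)z + t)(z−H)^{-1} satisfies: H₀ = H, H₁ = 1 − 2P, each H_t has no spectrum on the imaginary axis, and J H_t J = −H_t for all t. -/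
open Matrix Module

section ChiralAux

variable {R : Type*} [Field R] {V : Type*} [AddCommGroup V] [Module R V]

lemma aux_range_one_sub (p : Module.End R V) (hp : p * p = p) :
    LinearMap.range (1 - p) = LinearMap.ker p := by
  ext x
  constructor
  · rintro ⟨y, rfl⟩
    have : p (p y) = p y := by rw [← Module.End.mul_apply, hp]
    simp [LinearMap.mem_ker, this]
  · intro hx
    rw [LinearMap.mem_ker] at hx
    exact ⟨x, by simp [hx]⟩

lemma aux_ker_one_sub (p : Module.End R V) (hp : p * p = p) :
    LinearMap.ker (1 - p) = LinearMap.range p := by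
  ext x
  constructor
  · intro hx
    rw [LinearMap.mem_ker] at hx
    simp only [LinearMap.sub_apply, Module.End.one_apply, sub_eq_zero] at hx
    exact ⟨x, hx.symm⟩
  · rintro ⟨y, rfl⟩
    have : p (p y) = p y := by rw [← Module.End.mul_apply, hp]
    simp [LinearMap.mem_ker, this]

lemma aux_proj_eq (p q : Module.End R V) (hp : p * p = p) (hq : q * q = q)
    (hr : LinearMap.range q = LinearMap.range p)
    (hk : LinearMap.ker q = LinearMap.ker p) : q = p := by
  ext x
  have h1 : q (p x) = p x := by
    have : p x ∈ LinearMap.range q := by rw [hr]; exact ⟨x, rfl⟩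
    obtain ⟨y, hy⟩ := this
    calc q (p x) = q (q y) := by rw [hy]
    _ = (q * q) y := rfl
    _ = q y := by rw [hq]
    _ = p x := hy
  have h2 : q (x - p x) = 0 := by
    have hxk : x - p x ∈ LinearMap.ker p := by
      have : p (p x) = p x := by rw [← Module.End.mul_apply, hp]
      simp [LinearMap.mem_ker, this]
    rw [← hk] at hxk
    exact hxk
  have h3 := map_sub q x (p x)
  rw [h1, h2] at h3
  exact (sub_eq_zero.mp h3.symm)

lemma aux_map_map' (j : Module.End R V) (hjj : j * j = 1) (S : Submodule R V) :
    Submodule.map j (Submodule.map j S) = S := by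
  have hinv : ∀ x, j (j x) = x := fun x => by rw [← Module.End.mul_apply, hjj]; rfl
  ext x
  constructor
  · rintro ⟨y, ⟨w, hw, rfl⟩, rfl⟩
    rwa [hinv]
  · intro hx
    exact ⟨j x, ⟨x, hx, rfl⟩, hinv x⟩

lemma aux_comap_eq_map (j : Module.End R V) (hjj : j * j = 1) (S : Submodule R V) :
    Submodule.comap j S = Submodule.map j S := by
  have hinv : ∀ x, j (j x) = x := fun x => by rw [← Module.End.mul_apply, hjj]; rfl
  ext x
  constructor
  · intro hx
    exact ⟨j x, hx, hinv x⟩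
  · rintro ⟨y, hy, rfl⟩
    simpa [Submodule.mem_comap, hinv y] using hy

lemma aux_map_maxGen_le (f j : Module.End R V) (hfj : f * j = -(j * f)) (μ : R) :
    Submodule.map j ((Module.End.maxGenEigenspace f μ)) ≤ Module.End.maxGenEigenspace f (-μ) := by
  have hcomm : (f - (-μ) • (1 : Module.End R V)) * j = j * -(f - μ • 1) := by
    rw [sub_mul, smul_mul_assoc, one_mul, neg_smul, sub_neg_eq_add, hfj,
      mul_neg, mul_sub, mul_smul_comm, mul_one, neg_sub]
    abel
  have hpow : ∀ m : ℕ, (f - (-μ) • (1 : Module.End R V)) ^ m * j = j * (-(f - μ • 1)) ^ m := by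
    intro m
    induction m with
    | zero => simp
    | succ m ih =>
      rw [pow_succ, pow_succ, mul_assoc, hcomm, ← mul_assoc, ih, mul_assoc]
  rintro x ⟨y, hy, rfl⟩
  simp only [SetLike.mem_coe, Module.End.mem_maxGenEigenspace] at hy
  rw [Module.End.mem_maxGenEigenspace]
  obtain ⟨m, hm⟩ := hy
  refine ⟨m, ?_⟩
  have h1 : ((f - (-μ) • (1 : Module.End R V)) ^ m) (j y)
      = j (((-(f - μ • 1)) ^ m) y) := by
    rw [← Module.End.mul_apply, hpow, Module.End.mul_apply]
  have h2 : ((-(f - μ • 1)) ^ m) y = 0 := by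
    rw [neg_pow, Module.End.mul_apply, hm, map_zero]
  rw [h1, h2, map_zero]

lemma aux_map_maxGen (f j : Module.End R V) (hjj : j * j = 1) (hfj : f * j = -(j * f)) (μ : R) :
    Submodule.map j ((Module.End.maxGenEigenspace f μ)) = Module.End.maxGenEigenspace f (-μ) := by
  refine le_antisymm (aux_map_maxGen_le f j hfj μ) ?_
  have h2 := Submodule.map_mono (f := j) (aux_map_maxGen_le f j hfj (-μ))
  rw [neg_neg, aux_map_map' j hjj] at h2
  exact h2

lemma aux_map_iSup_neg (f j : Module.End R V) (hjj : j * j = 1) (hfj : f * j = -(j * f))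
    (Q : R → Prop) :
    Submodule.map j (⨆ (μ : R) (_ : Q μ), Module.End.maxGenEigenspace f μ)
      = ⨆ (μ : R) (_ : Q (-μ)), Module.End.maxGenEigenspace f μ := by
  simp only [Submodule.map_iSup]
  simp only [aux_map_maxGen f j hjj hfj]
  apply le_antisymm
  · refine iSup₂_le fun μ hμ => ?_
    exact le_iSup₂ (f := fun ν (_ : Q (-ν)) => Module.End.maxGenEigenspace f ν) (-μ)
      (by rwa [neg_neg])
  · refine iSup₂_le fun μ hμ => ?_
    have := le_iSup₂ (f := fun ν (_ : Q ν) => Module.End.maxGenEigenspace f (-ν)) (-μ) hμ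
    rwa [neg_neg] at this

end ChiralAux

section ChiralSpec

variable {V : Type*} [AddCommGroup V] [Module ℂ V] [FiniteDimensional ℂ V]

lemma aux_disjoint (f : Module.End ℂ V) {μ : ℂ} (Q : ℂ → Prop) (hμ : ¬ Q μ)
    {w : V} (hw1 : w ∈ f.maxGenEigenspace μ)
    (hw2 : w ∈ ⨆ (ν : ℂ) (_ : Q ν), f.maxGenEigenspace ν) : w = 0 := by
  have hd := (Module.End.independent_maxGenEigenspace f) μ
  have hle : (⨆ (ν : ℂ) (_ : Q ν), f.maxGenEigenspace ν)
      ≤ ⨆ (ν : ℂ) (_ : ν ≠ μ), f.maxGenEigenspace ν :=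
    iSup₂_le fun ν hν => le_iSup₂ (f := fun ν (_ : ν ≠ μ) => f.maxGenEigenspace ν) ν
      (fun h => hμ (h ▸ hν))
  exact (Submodule.disjoint_def.mp hd) w hw1 (hle hw2)

lemma aux_spec (f p : Module.End ℂ V) (hp : p * p = p) (hc : p * f = f * p)
    (hran : LinearMap.range p = ⨆ (μ : ℂ) (_ : μ.re < 0), f.maxGenEigenspace μ)
    (hker : LinearMap.ker p = ⨆ (μ : ℂ) (_ : 0 < μ.re), f.maxGenEigenspace μ)
    (t : ℝ) (ht0 : 0 ≤ t) (ht1 : t ≤ 1) (z : ℂ)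
    (hz : z ∈ spectrum ℂ (((1 - t : ℝ) : ℂ) • f + ((t : ℝ) : ℂ) • (1 - 2 • p))) :
    z.re ≠ 0 := by
  set a : ℂ := ((1 - t : ℝ) : ℂ) with ha
  set g : Module.End ℂ V := a • f + ((t : ℝ) : ℂ) • (1 - 2 • p) with hg
  have hgp : g * p = p * g := by
    have h1 : (1 - 2 • p : Module.End ℂ V) * p = p * (1 - 2 • p) := by
      rw [sub_mul, mul_sub, one_mul, mul_one, smul_mul_assoc, mul_smul_comm, hp]
    rw [hg, add_mul, mul_add, smul_mul_assoc, mul_smul_comm, hc,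
      smul_mul_assoc, mul_smul_comm, h1]
  obtain ⟨v, hv⟩ := (Module.End.hasEigenvalue_iff_mem_spectrum.mpr hz).exists_hasEigenvector
  have hgv : g v = z • v := Module.End.mem_eigenspace_iff.mp hv.1
  have hv0 : v ≠ 0 := hv.2
  have claimA : ∀ w : V, w ≠ 0 → p w = w → g w = z • w → z.re < 0 := by
    intro w hw0 hpw hgw
    have hfw : a • f w = (z + (t : ℂ)) • w := by
      have : g w = a • f w + ((t : ℝ) : ℂ) • (w - 2 • (p w)) := by
        simp [hg, LinearMap.add_apply, LinearMap.smul_apply, LinearMap.sub_apply]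
      rw [hpw] at this
      have h2 : w - 2 • w = -w := by rw [two_smul]; abel
      rw [h2, smul_neg] at this
      rw [this] at hgw
      have : a • f w = z • w + ((t:ℝ):ℂ) • w := by
        rw [← hgw]; abel
      rw [this, ← add_smul]
    by_cases ht : t = 1
    · subst ht
      have ha0 : a = 0 := by simp [ha]
      rw [ha0, zero_smul] at hfw
      have := (smul_eq_zero.mp hfw.symm).resolve_right hw0
      have hz1 : z = -1 := by
        have : z + 1 = 0 := by simpa using this
        linear_combination this
      rw [hz1]
      norm_num
    · have htlt : t < 1 := lt_of_le_of_ne ht1 ht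
      have ha0 : a ≠ 0 := by
        simp only [ha, ne_eq, Complex.ofReal_eq_zero]
        intro h; linarith [sub_eq_zero.mp h]
      set μ : ℂ := a⁻¹ * (z + (t : ℂ)) with hμdef
      have hfw' : f w = μ • w := by
        have := congrArg (fun u => a⁻¹ • u) hfw
        simpa [smul_smul, inv_mul_cancel₀ ha0, hμdef] using this
      have hmem : w ∈ f.maxGenEigenspace μ := by
        rw [Module.End.mem_maxGenEigenspace]
        exact ⟨1, by simp [pow_one, LinearMap.sub_apply, hfw', LinearMap.smul_apply]⟩
      have hμre : μ.re < 0 := by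
        by_contra hμ
        have hwr : w ∈ LinearMap.range p := ⟨w, hpw⟩
        rw [hran] at hwr
        exact hw0 (aux_disjoint f (fun ν => ν.re < 0) hμ hmem hwr)
      have hzeq : z = a * μ - (t : ℂ) := by
        rw [hμdef, ← mul_assoc, mul_inv_cancel₀ ha0, one_mul]
        ring
      have : z.re = (1 - t) * μ.re - t := by
        rw [hzeq, ha]
        simp [Complex.sub_re, Complex.mul_re]
      rw [this]
      nlinarith
  have claimB : ∀ w : V, w ≠ 0 → p w = 0 → g w = z • w → 0 < z.re := by
    intro w hw0 hpw hgw
    have hfw : a • f w = (z - (t : ℂ)) • w := by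
      have : g w = a • f w + ((t : ℝ) : ℂ) • (w - 2 • (p w)) := by
        simp [hg, LinearMap.add_apply, LinearMap.smul_apply, LinearMap.sub_apply]
      rw [hpw] at this
      simp only [smul_zero, sub_zero] at this
      rw [this] at hgw
      have : a • f w = z • w - ((t:ℝ):ℂ) • w := by
        rw [← hgw]; abel
      rw [this, ← sub_smul]
    by_cases ht : t = 1
    · subst ht
      have ha0 : a = 0 := by simp [ha]
      rw [ha0, zero_smul] at hfw
      have := (smul_eq_zero.mp hfw.symm).resolve_right hw0
      have hz1 : z = 1 := by
        have : z - 1 = 0 := by simpa using this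
        linear_combination this
      rw [hz1]
      norm_num
    · have htlt : t < 1 := lt_of_le_of_ne ht1 ht
      have ha0 : a ≠ 0 := by
        simp only [ha, ne_eq, Complex.ofReal_eq_zero]
        intro h; linarith [sub_eq_zero.mp h]
      set μ : ℂ := a⁻¹ * (z - (t : ℂ)) with hμdef
      have hfw' : f w = μ • w := by
        have := congrArg (fun u => a⁻¹ • u) hfw
        simpa [smul_smul, inv_mul_cancel₀ ha0, hμdef] using this
      have hmem : w ∈ f.maxGenEigenspace μ := by
        rw [Module.End.mem_maxGenEigenspace]
        exact ⟨1, by simp [pow_one, LinearMap.sub_apply, hfw', LinearMap.smul_apply]⟩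
      have hμre : 0 < μ.re := by
        by_contra hμ
        have hwr : w ∈ LinearMap.ker p := by rwa [LinearMap.mem_ker]
        rw [hker] at hwr
        exact hw0 (aux_disjoint f (fun ν => 0 < ν.re) hμ hmem hwr)
      have hzeq : z = a * μ + (t : ℂ) := by
        rw [hμdef, ← mul_assoc, mul_inv_cancel₀ ha0, one_mul]
        ring
      have : z.re = (1 - t) * μ.re + t := by
        rw [hzeq, ha]
        simp [Complex.add_re, Complex.mul_re]
      rw [this]
      nlinarith
  have hgpv : g (p v) = z • (p v) := by
    calc g (p v) = (g * p) v := rfl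
    _ = p (g v) := by rw [hgp]; rfl
    _ = z • (p v) := by rw [hgv, _root_.map_smul]
  have hppv : p (p v) = p v := by rw [← Module.End.mul_apply, hp]
  by_cases hpv : p v = 0
  · have hgw : g (v - p v) = z • (v - p v) := by
      rw [map_sub, hgv, hgpv, ← smul_sub]
    have hwv : v - p v ≠ 0 := by rw [hpv, sub_zero]; exact hv0
    have hpw : p (v - p v) = 0 := by rw [map_sub, hppv, sub_self]
    exact ne_of_gt (claimB (v - p v) hwv hpw hgw)
  · exact ne_of_lt (claimA (p v) hpv hppv hgpv)

end ChiralSpec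

/-- Let `H` be a complex matrix with no spectrum on the imaginary axis,
`JHJ = −H` for a selfadjoint unitary `J = diag(1,−1)`, and `P` the Riesz projection
onto the spectrum with negative real part (characterized via generalized eigenspaces).
The path `t ↦ H_t = ∮_γ (dz/2πi)((1−t)z − t)(z−H)⁻¹ + ∮_{−γ} (dz/2πi)((1−t)z + t)(z−H)⁻¹`,
which by the holomorphic functional calculus equals `H_t = (1−t)H + t(1 − 2P)`,
satisfies: `H₀ = H`, `H₁ = 1 − 2P`, each `H_t` has no spectrum on the imaginary axis,
and `J H_t J = −H_t` for all `t ∈ [0,1]`. -/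
theorem chiral_flattening_path {k l : ℕ}
    (H P : Matrix (Fin k ⊕ Fin l) (Fin k ⊕ Fin l) ℂ)
    (J : Matrix (Fin k ⊕ Fin l) (Fin k ⊕ Fin l) ℂ)
    (hJ : J = Matrix.fromBlocks 1 0 0 (-1))
    (hspec : ∀ z ∈ spectrum ℂ H, z.re ≠ 0)
    (hchiral : J * H * J = -H)
    (hP2 : P * P = P)
    (hPH : P * H = H * P)
    (hran : LinearMap.range (Matrix.toLin' P) =
        ⨆ (μ : ℂ) (_ : μ.re < 0), Module.End.maxGenEigenspace (Matrix.toLin' H) μ)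
    (hker : LinearMap.ker (Matrix.toLin' P) =
        ⨆ (μ : ℂ) (_ : 0 < μ.re), Module.End.maxGenEigenspace (Matrix.toLin' H) μ) :
    letI Hpath : ℝ → Matrix (Fin k ⊕ Fin l) (Fin k ⊕ Fin l) ℂ :=
      fun t => ((1 - t : ℝ) : ℂ) • H + ((t : ℝ) : ℂ) • (1 - 2 • P)
    Hpath 0 = H ∧ Hpath 1 = 1 - 2 • P ∧
    ∀ t ∈ Set.Icc (0 : ℝ) 1,
      (∀ z ∈ spectrum ℂ (Hpath t), z.re ≠ 0) ∧ J * Hpath t * J = -(Hpath t) := by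
  have hJJ : J * J = 1 := by
    rw [hJ]
    simp [Matrix.fromBlocks_multiply, ← Matrix.fromBlocks_one]
  have hHJ : H * J = -(J * H) := by
    calc H * J = (J * J) * (H * J) := by rw [hJJ, one_mul]
    _ = J * (J * H * J) := by noncomm_ring
    _ = J * (-H) := by rw [hchiral]
    _ = -(J * H) := by rw [mul_neg]
  set φ : Matrix (Fin k ⊕ Fin l) (Fin k ⊕ Fin l) ℂ
      ≃ₐ[ℂ] Module.End ℂ ((Fin k ⊕ Fin l) → ℂ) := Matrix.toLinAlgEquiv' with hφ
  have hphi : ∀ M : Matrix (Fin k ⊕ Fin l) (Fin k ⊕ Fin l) ℂ,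
      Matrix.toLin' M = φ M := fun M => rfl
  set f : Module.End ℂ ((Fin k ⊕ Fin l) → ℂ) := φ H with hf
  set p : Module.End ℂ ((Fin k ⊕ Fin l) → ℂ) := φ P with hp
  set j : Module.End ℂ ((Fin k ⊕ Fin l) → ℂ) := φ J with hj
  have hpp : p * p = p := by rw [hp, ← _root_.map_mul, hP2]
  have hjj : j * j = 1 := by rw [hj, ← _root_.map_mul, hJJ, _root_.map_one]
  have hpf : p * f = f * p := by
    rw [hp, hf, ← _root_.map_mul, ← _root_.map_mul, hPH]
  have hfj : f * j = -(j * f) := by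
    rw [hf, hj, ← _root_.map_mul, ← _root_.map_mul, ← _root_.map_neg, hHJ]
  have hran' : LinearMap.range p = ⨆ (μ : ℂ) (_ : μ.re < 0), f.maxGenEigenspace μ := by
    rw [hp, ← hphi P, hran, hf, ← hphi H]
  have hker' : LinearMap.ker p = ⨆ (μ : ℂ) (_ : 0 < μ.re), f.maxGenEigenspace μ := by
    rw [hp, ← hphi P, hker, hf, ← hphi H]
  have hJPJ : J * P * J = 1 - P := by
    have hinv : ∀ x, j (j x) = x := fun x => by rw [← Module.End.mul_apply, hjj]; rfl
    have hjsurj : Function.Surjective j := fun x => ⟨j x, hinv x⟩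
    have hjinj : Function.Injective j := by
      intro x y hxy
      have := congrArg j hxy
      rwa [hinv, hinv] at this
    set q : Module.End ℂ ((Fin k ⊕ Fin l) → ℂ) := j * (1 - p) * j with hq
    have h1p : (1 - p) * (1 - p) = 1 - p := by
      rw [sub_mul, mul_sub, mul_sub, one_mul, mul_one, one_mul, hpp]
      abel
    have hqq : q * q = q := by
      rw [hq]
      calc j * (1 - p) * j * (j * (1 - p) * j)
          = j * (1 - p) * (j * j) * (1 - p) * j := by noncomm_ring
      _ = j * ((1 - p) * (1 - p)) * j := by rw [hjj]; noncomm_ring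
      _ = j * (1 - p) * j := by rw [h1p]
    have hneg_re : ∀ μ : ℂ, (0 < (-μ).re) = (μ.re < 0) := fun μ => by
      simp [Complex.neg_re]
    have hpos_re : ∀ μ : ℂ, ((-μ).re < 0) = (0 < μ.re) := fun μ => by
      simp [Complex.neg_re]
    have hmapker : Submodule.map j (LinearMap.ker p) = LinearMap.range p := by
      rw [hker', aux_map_iSup_neg f j hjj hfj (fun ν => 0 < ν.re), hran']
      exact iSup_congr fun μ => by rw [hneg_re μ]
    have hmapran : Submodule.map j (LinearMap.range p) = LinearMap.ker p := by
      rw [hran', aux_map_iSup_neg f j hjj hfj (fun ν => ν.re < 0), hker']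
      exact iSup_congr fun μ => by rw [hpos_re μ]
    have hrq : LinearMap.range q = LinearMap.range p := by
      have e1 : LinearMap.range q = Submodule.map (j * (1 - p)) (LinearMap.range j) := by
        rw [hq, Module.End.mul_eq_comp, LinearMap.range_comp]
      rw [e1, LinearMap.range_eq_top.mpr hjsurj, Submodule.map_top,
        Module.End.mul_eq_comp, LinearMap.range_comp,
        aux_range_one_sub p hpp, hmapker]
    have hkq : LinearMap.ker q = LinearMap.ker p := by
      have e1 : q = j * ((1 - p) * j) := by rw [hq, mul_assoc]
      have hkerj : LinearMap.ker j = ⊥ := LinearMap.ker_eq_bot.mpr hjinj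
      rw [e1, Module.End.mul_eq_comp, LinearMap.ker_comp, hkerj, Submodule.comap_bot,
        Module.End.mul_eq_comp, LinearMap.ker_comp, aux_ker_one_sub p hpp,
        aux_comap_eq_map j hjj, hmapran]
    have hqp : q = p := aux_proj_eq p q hpp hqq hrq hkq
    have hmat : J * (1 - P) * J = P := by
      apply φ.injective
      rw [_root_.map_mul, _root_.map_mul, _root_.map_sub, _root_.map_one]
      exact hqp
    have h2 : J * (1 - P) * J = J * J - J * P * J := by
      rw [mul_sub, mul_one, sub_mul]
    have h5 := h2.symm.trans hmat
    rw [hJJ] at h5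
    rw [eq_sub_iff_add_eq, add_comm]
    exact (sub_eq_iff_eq_add.mp h5).symm
  refine ⟨by norm_num, by norm_num, ?_⟩
  rintro t ⟨ht0, ht1⟩
  constructor
  · intro z hz
    have heq : φ (((1 - t : ℝ) : ℂ) • H + ((t : ℝ) : ℂ) • (1 - 2 • P))
        = ((1 - t : ℝ) : ℂ) • f + ((t : ℝ) : ℂ) • (1 - 2 • p) := by
      rw [_root_.map_add, _root_.map_smul, _root_.map_smul, _root_.map_sub,
        _root_.map_one, map_nsmul]
    have hz' : z ∈ spectrum ℂ
        (((1 - t : ℝ) : ℂ) • f + ((t : ℝ) : ℂ) • (1 - 2 • p)) := by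
      rw [← heq, AlgEquiv.spectrum_eq]
      exact hz
    exact aux_spec f p hpp hpf hran' hker' t ht0 ht1 z hz'
  · have h12 : J * (1 - 2 • P) * J = -(1 - 2 • P) := by
      have e : J * (1 - 2 • P) * J = J * J - (J * P * J + J * P * J) := by
        rw [two_smul]
        noncomm_ring
      rw [e, hJJ, hJPJ, two_smul]
      abel
    show J * (((1 - t : ℝ) : ℂ) • H + ((t : ℝ) : ℂ) • (1 - 2 • P)) * J
        = -(((1 - t : ℝ) : ℂ) • H + ((t : ℝ) : ℂ) • (1 - 2 • P))
    rw [mul_add, add_mul, mul_smul_comm, smul_mul_assoc,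
      mul_smul_comm, smul_mul_assoc, hchiral, h12, smul_neg, smul_neg, ← neg_add]
end
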